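/- arXiv:math-ph/0404066 — 10 statements merged into one kernel-verified Lean document; each statement's English description precedes it below -/
import Mathlib

section
/- Let b be a prime and a an integer. If there exist rational numbers x0, x1, x2, x3, not all zero, satisfying (x0² - a·x1²) - b·(x2² - a·x3²) = 0, then a is a quadratic residue modulo b (i.e. there exists y with y² ≡ a (mod b)). -/
/-!
If `a` is not a square modulo `b`, the form `x² - a y²` has no nontrivial zero modulo `b`.
Clearing denominators gives an integer zero of `(X₀² - a X₁²) - b (X₂² - a X₃²)`; reducing
modulo `b` forces `b ∣ X₀, X₁`, and then, after dividing the equation by `b`, also `b ∣ X₂, X₃`.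
So the solution can be divided by `b` forever, which is only possible for the zero solution.
-/

lemma eq_zero_of_sq_sub_mul_sq_eq_zero {F : Type*} [Field F] {a x y : F} (ha : ¬IsSquare a)
    (h : x ^ 2 - a * y ^ 2 = 0) : x = 0 ∧ y = 0 := by
  by_cases hy : y = 0
  · subst hy
    exact ⟨pow_eq_zero_iff two_ne_zero |>.mp (by simpa using h), rfl⟩
  · refine absurd ⟨x / y, ?_⟩ ha
    field_simp
    linear_combination -h

lemma Int.prime_dvd_of_dvd_sq_sub_mul_sq {p : ℕ} [Fact p.Prime] {a X Y : ℤ}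
    (ha : ¬IsSquare (a : ZMod p)) (h : (p : ℤ) ∣ X ^ 2 - a * Y ^ 2) :
    (p : ℤ) ∣ X ∧ (p : ℤ) ∣ Y := by
  simp only [← ZMod.intCast_zmod_eq_zero_iff_dvd] at h ⊢
  push_cast at h
  exact eq_zero_of_sq_sub_mul_sq_eq_zero ha h

section Descent

variable {p : ℕ} [Fact p.Prime] {a : ℤ}

lemma Int.prime_dvd_of_sq_sub_mul_sq_eq_prime_mul (ha : ¬IsSquare (a : ZMod p))
    {X₀ X₁ X₂ X₃ : ℤ} (h : X₀ ^ 2 - a * X₁ ^ 2 = p * (X₂ ^ 2 - a * X₃ ^ 2)) :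
    (p : ℤ) ∣ X₀ ∧ (p : ℤ) ∣ X₁ ∧ (p : ℤ) ∣ X₂ ∧ (p : ℤ) ∣ X₃ := by
  obtain ⟨⟨Y₀, rfl⟩, ⟨Y₁, rfl⟩⟩ :=
    Int.prime_dvd_of_dvd_sq_sub_mul_sq ha (h ▸ dvd_mul_right _ _)
  have hp : (p : ℤ) ≠ 0 := by exact_mod_cast (Fact.out : p.Prime).ne_zero
  have h' : X₂ ^ 2 - a * X₃ ^ 2 = p * (Y₀ ^ 2 - a * Y₁ ^ 2) :=
    mul_left_cancel₀ hp (by linear_combination -h)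
  exact ⟨dvd_mul_right _ _, dvd_mul_right _ _,
    Int.prime_dvd_of_dvd_sq_sub_mul_sq ha (h' ▸ dvd_mul_right _ _)⟩

lemma Int.prime_pow_dvd_of_sq_sub_mul_sq_eq_prime_mul (ha : ¬IsSquare (a : ZMod p)) (n : ℕ) :
    ∀ {X₀ X₁ X₂ X₃ : ℤ}, X₀ ^ 2 - a * X₁ ^ 2 = p * (X₂ ^ 2 - a * X₃ ^ 2) →
      (p : ℤ) ^ n ∣ X₀ ∧ (p : ℤ) ^ n ∣ X₁ ∧ (p : ℤ) ^ n ∣ X₂ ∧ (p : ℤ) ^ n ∣ X₃ := by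
  induction n with
  | zero => simp
  | succ n ih =>
    intro X₀ X₁ X₂ X₃ h
    obtain ⟨⟨Y₀, rfl⟩, ⟨Y₁, rfl⟩, ⟨Y₂, rfl⟩, ⟨Y₃, rfl⟩⟩ :=
      Int.prime_dvd_of_sq_sub_mul_sq_eq_prime_mul ha h
    have hp : (p : ℤ) ^ 2 ≠ 0 := pow_ne_zero 2 (by exact_mod_cast (Fact.out : p.Prime).ne_zero)
    obtain ⟨h₀, h₁, h₂, h₃⟩ := ih (X₀ := Y₀) (X₁ := Y₁) (X₂ := Y₂) (X₃ := Y₃)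
      (mul_left_cancel₀ hp (by linear_combination h))
    simp only [pow_succ']
    exact ⟨mul_dvd_mul_left _ h₀, mul_dvd_mul_left _ h₁, mul_dvd_mul_left _ h₂,
      mul_dvd_mul_left _ h₃⟩

lemma Int.eq_zero_of_forall_prime_pow_dvd {X : ℤ} (h : ∀ n : ℕ, (p : ℤ) ^ n ∣ X) : X = 0 := by
  by_contra hX
  obtain ⟨n, hn⟩ : FiniteMultiplicity (p : ℤ) X :=
    Int.finiteMultiplicity_iff.mpr ⟨by simpa using (Fact.out : p.Prime).ne_one, hX⟩
  exact hn (h (n + 1))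

lemma Int.eq_zero_of_sq_sub_mul_sq_eq_prime_mul (ha : ¬IsSquare (a : ZMod p))
    {X₀ X₁ X₂ X₃ : ℤ} (h : X₀ ^ 2 - a * X₁ ^ 2 = p * (X₂ ^ 2 - a * X₃ ^ 2)) :
    X₀ = 0 ∧ X₁ = 0 ∧ X₂ = 0 ∧ X₃ = 0 := by
  have hdvd n := Int.prime_pow_dvd_of_sq_sub_mul_sq_eq_prime_mul ha n h
  exact ⟨Int.eq_zero_of_forall_prime_pow_dvd fun n ↦ (hdvd n).1,
    Int.eq_zero_of_forall_prime_pow_dvd fun n ↦ (hdvd n).2.1,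
    Int.eq_zero_of_forall_prime_pow_dvd fun n ↦ (hdvd n).2.2.1,
    Int.eq_zero_of_forall_prime_pow_dvd fun n ↦ (hdvd n).2.2.2⟩

end Descent

lemma Rat.exists_intCast_eq_mul_of_den_dvd (q : ℚ) {n : ℕ} (h : q.den ∣ n) :
    ∃ Z : ℤ, (Z : ℚ) = n * q := by
  obtain ⟨k, rfl⟩ := h
  exact ⟨q.num * k, by push_cast; rw [← Rat.mul_den_eq_num]; ring⟩

/-- If the quaternary form (x0² - a x1²) - b(x2² - a x3²) has a nontrivial
rational zero, with b prime, then a is a quadratic residue mod b. -/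
theorem quaternion_zero_divisor_implies_square
    (b : ℕ) (hb : b.Prime) (a : ℤ)
    (x0 x1 x2 x3 : ℚ)
    (hnz : ¬ (x0 = 0 ∧ x1 = 0 ∧ x2 = 0 ∧ x3 = 0))
    (heq : (x0 ^ 2 - (a : ℚ) * x1 ^ 2) - (b : ℚ) * (x2 ^ 2 - (a : ℚ) * x3 ^ 2) = 0) :
    IsSquare ((a : ZMod b)) := by
  have : Fact b.Prime := ⟨hb⟩
  by_contra ha
  set d := x0.den * x1.den * x2.den * x3.den
  obtain ⟨X₀, hX₀⟩ :=
    x0.exists_intCast_eq_mul_of_den_dvd (n := d) ⟨x1.den * x2.den * x3.den, by ring⟩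
  obtain ⟨X₁, hX₁⟩ :=
    x1.exists_intCast_eq_mul_of_den_dvd (n := d) ⟨x0.den * x2.den * x3.den, by ring⟩
  obtain ⟨X₂, hX₂⟩ :=
    x2.exists_intCast_eq_mul_of_den_dvd (n := d) ⟨x0.den * x1.den * x3.den, by ring⟩
  obtain ⟨X₃, hX₃⟩ :=
    x3.exists_intCast_eq_mul_of_den_dvd (n := d) ⟨x0.den * x1.den * x2.den, by ring⟩
  have hX : X₀ ^ 2 - a * X₁ ^ 2 = b * (X₂ ^ 2 - a * X₃ ^ 2) := by
    have : ((X₀ ^ 2 - a * X₁ ^ 2 : ℤ) : ℚ) = ((b * (X₂ ^ 2 - a * X₃ ^ 2) : ℤ) : ℚ) := by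
      push_cast
      rw [hX₀, hX₁, hX₂, hX₃]
      linear_combination (d : ℚ) ^ 2 * heq
    exact_mod_cast this
  have hd : (d : ℚ) ≠ 0 := by positivity
  obtain ⟨h₀, h₁, h₂, h₃⟩ := Int.eq_zero_of_sq_sub_mul_sq_eq_prime_mul ha hX
  simp only [h₀, h₁, h₂, h₃, Int.cast_zero, eq_comm (a := (0 : ℚ)), mul_eq_zero, hd,
    false_or] at hX₀ hX₁ hX₂ hX₃
  exact hnz ⟨hX₀, hX₁, hX₂, hX₃⟩
end

section
/- Let a1, ..., an be negative integers (each aᵢ < 0). Then there exist infinitely many primes p such that the Legendre symbol (aᵢ/p) = -1 for all i = 1, ..., n. -/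
/-!
Let `m = ∏ |aᵢ|`. By Dirichlet there are infinitely many primes `p ≡ -1 (mod 4m)`. For such `p`
and any `k ∣ m`, quadratic reciprocity gives `(k/p) = 1` (the odd part of `k` divides `p + 1`
and `p ≡ 3 (mod 4)`; the power of two, if present, forces `p ≡ 7 (mod 8)`), while
`(-1/p) = -1`. Hence `(aᵢ/p) = (-1/p)(|aᵢ|/p) = -1`.
-/

open ZMod
open scoped NumberTheorySymbols

namespace jacobiSym

theorem two_eq_one_of_mod_eight_eq_seven {b : ℕ} (hb : b % 8 = 7) : J(2 | b) = 1 := by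
  rw [at_two (Nat.odd_iff.mpr (by omega)), χ₈_nat_eq_if_mod_eight]
  simp [hb, show b % 2 = 1 by omega]

theorem natCast_eq_one_of_odd_of_dvd_add_one {u b : ℕ} (hu : Odd u) (hb : b % 4 = 3)
    (hdvd : u ∣ b + 1) : J(u | b) = 1 := by
  have hb_odd : Odd b := Nat.odd_iff.mpr (by omega)
  have hb_neg : (b : ℤ) % u = -1 % u :=
    (Int.modEq_iff_dvd.mpr (by simpa using Int.natCast_dvd_natCast.mpr hdvd)).symm
  rw [quadratic_reciprocity' hu hb_odd, qrSign, χ₄_nat_three_mod_four hb, at_neg_one hu,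
    mod_left' hb_neg, at_neg_one hu]
  rcases Nat.odd_mod_four_iff.mp (Nat.odd_iff.mp hu) with h | h
  · rw [χ₄_nat_one_mod_four h]; rfl
  · rw [χ₄_nat_three_mod_four h]; rfl

theorem natCast_eq_one_of_dvd_add_one {n b : ℕ} (hdvd : 4 * n ∣ b + 1) : J(n | b) = 1 := by
  obtain ⟨e, u, hu, rfl⟩ := Nat.exists_eq_two_pow_mul_odd (n := n) (by rintro rfl; simp at hdvd)
  have hb4 : b % 4 = 3 := by have := (Dvd.intro _ rfl).trans hdvd; omega
  have hJ2 : J(2 | b) ^ e = 1 := by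
    rcases e with _ | e
    · exact pow_zero _
    · have h8 : 8 ∣ b + 1 := (Dvd.intro (2 ^ e * u) (by ring)).trans hdvd
      rw [two_eq_one_of_mod_eight_eq_seven (by omega), one_pow]
  have hu_dvd : u ∣ b + 1 := (Dvd.intro_left (4 * 2 ^ e) (by ring)).trans hdvd
  push_cast
  rw [mul_left, pow_left, hJ2, natCast_eq_one_of_odd_of_dvd_add_one hu hb4 hu_dvd, one_mul]

theorem eq_neg_one_of_neg {a : ℤ} {b : ℕ} (ha : a < 0) (hdvd : 4 * a.natAbs ∣ b + 1) :
    J(a | b) = -1 := by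
  have hb4 : b % 4 = 3 := by have := (Dvd.intro _ rfl).trans hdvd; omega
  rw [← neg_neg a, ← Int.ofNat_natAbs_of_nonpos ha.le,
    jacobiSym.neg _ (Nat.odd_iff.mpr (by omega)), χ₄_nat_three_mod_four hb4,
    natCast_eq_one_of_dvd_add_one hdvd, mul_one]

end jacobiSym

/-- For negative integers a₁,…,aₙ there are infinitely many primes p with
Legendre symbol (aᵢ/p) = -1 for all i. -/
theorem infinitely_many_primes_nonresidue
    (n : ℕ) (a : Fin n → ℤ) (ha : ∀ i, a i < 0) :
    {p : ℕ | ∃ hp : p.Prime, ∀ i, @legendreSym p ⟨hp⟩ (a i) = -1}.Infinite := by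
  set m := ∏ i, (a i).natAbs
  have : NeZero (4 * m) :=
    ⟨mul_ne_zero four_ne_zero (Finset.prod_ne_zero_iff.mpr fun i _ => by simp [(ha i).ne])⟩
  have h_unit : IsUnit (-1 : ZMod (4 * m)) := isUnit_one.neg
  refine (Nat.infinite_setOfPred_prime_and_eq_mod h_unit).mono ?_
  rintro p ⟨hp, hp_mod⟩
  have hdvd : 4 * m ∣ p + 1 :=
    (ZMod.natCast_eq_zero_iff _ _).mp (by push_cast [hp_mod]; ring)
  refine ⟨hp, fun i => ?_⟩
  have : Fact p.Prime := ⟨hp⟩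
  rw [jacobiSym.legendreSym.to_jacobiSym]
  exact jacobiSym.eq_neg_one_of_neg (ha i)
    ((mul_dvd_mul_left 4 (Finset.dvd_prod_of_mem _ (Finset.mem_univ i))).trans hdvd)
end

section
/- Let a < 0 be a squarefree integer, b a prime with Legendre symbol (a/b) = -1, and suppose X, Y, Z are integers with gcd(X, Y, Z) = 1 satisfying a·X² + b·(Y² - a·Z²) = 0. Then X = Y = Z = 0, a contradiction; that is, the equation a X² + b(Y² - a Z²) = 0 has no solution in coprime integers. -/
/-!
Reduce modulo `b`: since `a` is a unit but not a square mod `b`, the equation forces `b ∣ X`;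
dividing by `b` leaves `Y² ≡ a Z² (mod b)`, which for a non-square `a` forces `b ∣ Y` and `b ∣ Z`.
So `b` divides `gcd(X, Y, Z) = 1`.
-/

theorem eq_zero_of_sq_eq_mul_sq_of_not_isSquare {K : Type*} [Field K] {a y z : K}
    (ha : ¬IsSquare a) (h : y ^ 2 = a * z ^ 2) : y = 0 ∧ z = 0 := by
  have hz : z = 0 := by
    by_contra hz
    exact ha ⟨y / z, by field_simp; linear_combination -h⟩
  exact ⟨by simpa [hz] using h, hz⟩

theorem prime_dvd_of_mul_sq_add_mul_sub_eq_zero {p : ℕ} [Fact p.Prime] {a x y z : ℤ}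
    (ha : ¬IsSquare (a : ZMod p)) (h : a * x ^ 2 + p * (y ^ 2 - a * z ^ 2) = 0) :
    (p : ℤ) ∣ x ∧ (p : ℤ) ∣ y ∧ (p : ℤ) ∣ z := by
  simp only [← ZMod.intCast_zmod_eq_zero_iff_dvd]
  have ha0 : (a : ZMod p) ≠ 0 := fun h0 ↦ ha (h0 ▸ IsSquare.zero)
  have hx : (x : ZMod p) = 0 := by
    have h' := congrArg (Int.cast : ℤ → ZMod p) h
    push_cast [ZMod.natCast_self] at h'
    simpa [ha0] using h'
  obtain ⟨x', rfl⟩ := (ZMod.intCast_zmod_eq_zero_iff_dvd x p).mp hx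
  have hp : (p : ℤ) ≠ 0 := by exact_mod_cast (Fact.out : p.Prime).ne_zero
  have h_div : a * p * x' ^ 2 + (y ^ 2 - a * z ^ 2) = 0 :=
    (mul_eq_zero.mp (by linear_combination h : (p : ℤ) * _ = 0)).resolve_left hp
  have hyz : (y : ZMod p) ^ 2 = a * (z : ZMod p) ^ 2 := by
    have h' := congrArg (Int.cast : ℤ → ZMod p) h_div
    push_cast [ZMod.natCast_self] at h'
    linear_combination h'
  exact ⟨hx, eq_zero_of_sq_eq_mul_sq_of_not_isSquare ha hyz⟩

theorem no_parabolic_elements_general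
    (a : ℤ)
    (b : ℕ) (hb : b.Prime) (hab : @legendreSym b ⟨hb⟩ a = -1)
    (X Y Z : ℤ) (hgcd : Int.gcd (Int.gcd X Y) Z = 1)
    (heq : a * X ^ 2 + (b : ℤ) * (Y ^ 2 - a * Z ^ 2) = 0) : False := by
  have : Fact b.Prime := ⟨hb⟩
  obtain ⟨hX, hY, hZ⟩ :=
    prime_dvd_of_mul_sq_add_mul_sub_eq_zero ((legendreSym.eq_neg_one_iff b).mp hab) heq
  have hdvd : (b : ℤ) ∣ (Int.gcd (Int.gcd X Y) Z : ℤ) :=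
    Int.dvd_coe_gcd (Int.dvd_coe_gcd hX hY) hZ
  rw [hgcd] at hdvd
  exact hb.one_lt.ne' (by exact_mod_cast Int.eq_one_of_dvd_one (by positivity) hdvd)

/-- If a < 0 is squarefree and b is a prime with (a/b) = -1, then the equation
a X² + b (Y² - a Z²) = 0 has no solution in coprime integers. -/
theorem no_parabolic_elements
    (a : ℤ) (hsf : Squarefree a) (hneg : a < 0)
    (b : ℕ) (hb : b.Prime) (hab : @legendreSym b ⟨hb⟩ a = -1)
    (X Y Z : ℤ) (hgcd : Int.gcd (Int.gcd X Y) Z = 1)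
    (heq : a * X ^ 2 + (b : ℤ) * (Y ^ 2 - a * Z ^ 2) = 0) : False :=
  no_parabolic_elements_general a b hb hab X Y Z hgcd heq
end

section
/- Let a < 0 and b > 0 be integers with b prime and (a/b) = -1. Then for all integers t and u, the integer d = a·u² + b·(1 - a·t²) is not a perfect square in ℤ. -/
/-! Write the square as `s ^ 2`, so `s ^ 2 - a u ^ 2 = b (1 - a t ^ 2)`. Since `a` is a nonresidue
mod `b`, the form `x ^ 2 - a y ^ 2` vanishes mod `b` only at `x ≡ y ≡ 0`; hence `b ∣ s, u`, so
`b ^ 2` divides the left side and `b ∣ 1 ^ 2 - a t ^ 2`, which the same fact forbids. -/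

theorem prime_dvd_of_isSquare_mul_sq_add_mul {p : ℕ} [Fact p.Prime] {a : ℤ}
    (h : legendreSym p a = -1) {u c : ℤ} (hsq : IsSquare (a * u ^ 2 + p * c)) : (p : ℤ) ∣ c := by
  obtain ⟨s, hs⟩ := hsq
  have hp : (p : ℤ) ≠ 0 := by exact_mod_cast (Fact.out : p.Prime).ne_zero
  obtain ⟨⟨s', rfl⟩, ⟨u', rfl⟩⟩ :=
    legendreSym.prime_dvd_of_eq_neg_one h (x := s) (y := u) ⟨c, by linear_combination -hs⟩
  exact ⟨s' ^ 2 - a * u' ^ 2, mul_left_cancel₀ hp (by linear_combination hs)⟩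

theorem pell_coefficient_not_square_general
    (a : ℤ)
    (b : ℕ) (hb : b.Prime) (hab : @legendreSym b ⟨hb⟩ a = -1)
    (t u : ℤ) :
    ¬ IsSquare (a * u ^ 2 + (b : ℤ) * (1 - a * t ^ 2)) := by
  have : Fact b.Prime := ⟨hb⟩
  intro hsq
  have hdvd : (b : ℤ) ∣ 1 ^ 2 - a * t ^ 2 := by
    simpa using prime_dvd_of_isSquare_mul_sq_add_mul hab hsq
  have hb_dvd_one : (b : ℤ) ∣ 1 := (legendreSym.prime_dvd_of_eq_neg_one hab hdvd).1
  exact hb.ne_one (by exact_mod_cast Int.eq_one_of_dvd_one (by positivity) hb_dvd_one)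

/-- If a < 0, b > 0 with b prime and (a/b) = -1, then for all integers t, u the
integer a u² + b (1 - a t²) is not a perfect square. -/
theorem pell_coefficient_not_square
    (a : ℤ) (hneg : a < 0)
    (b : ℕ) (hbpos : 0 < b) (hb : b.Prime) (hab : @legendreSym b ⟨hb⟩ a = -1)
    (t u : ℤ) :
    ¬ IsSquare (a * u ^ 2 + (b : ℤ) * (1 - a * t ^ 2)) :=
  pell_coefficient_not_square_general a b hb hab t u
end

section
/- Let d ∈ ℤ \ {1} be squarefree, K = ℚ(√d), and a ∈ O_K not a square in K. Then the set of rational primes p such that there exists a prime ideal P of O_K lying over p with a not a square modulo P has Dirichlet density at least 1/4; more precisely, ∑_{P ∈ A} N(P)^{-s} ≤ 2 ∑_{pℤ ∈ B} p^{-s}, where A is the set of primes P of O_K modulo which a is not a square and B is the set of rational primes under them, and A has density 1/2. -/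
open NumberField Filter IntermediateField

open scoped ENNReal

set_option synthInstance.maxHeartbeats 1000000
set_option maxHeartbeats 1000000

private lemma finrank_eq_two' {K : Type*} [Field K] [NumberField K] (d : ℤ)
    (hd : Squarefree d) (hd1 : d ≠ 1) (α : K) (hα : α ^ 2 = (d : K))
    (hgen : Algebra.adjoin ℚ {α} = ⊤) : Module.finrank ℚ K = 2 := by
  have hdQ : ∀ b : ℚ, b ^ 2 ≠ (d : ℚ) := by
    intro b hb
    have hsq : IsSquare ((d : ℤ) : ℚ) := ⟨b, by rw [← hb]; ring⟩
    obtain ⟨r, hr⟩ := Rat.isSquare_intCast_iff.mp hsq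
    have hu : IsUnit r := hd r (by rw [hr])
    rcases Int.isUnit_iff.mp hu with h | h <;> simp [h] at hr <;> omega
  have hirr : Irreducible (Polynomial.X ^ 2 - Polynomial.C (d : ℚ)) :=
    X_pow_sub_C_irreducible_of_prime Nat.prime_two hdQ
  have hint : IsIntegral ℚ α := IsIntegral.of_finite ℚ α
  have hroot : Polynomial.aeval α (Polynomial.X ^ 2 - Polynomial.C (d : ℚ)) = 0 := by
    simp [hα]
  have hmin : minpoly ℚ α = Polynomial.X ^ 2 - Polynomial.C (d : ℚ) :=
    (minpoly.eq_of_irreducible_of_monic hirr hroot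
      (Polynomial.monic_X_pow_sub_C _ two_ne_zero)).symm
  have htop : ℚ⟮α⟯ = (⊤ : IntermediateField ℚ K) := by
    rw [← IntermediateField.toSubalgebra_injective.eq_iff,
      IntermediateField.adjoin_simple_toSubalgebra_of_isAlgebraic hint.isAlgebraic, hgen,
      IntermediateField.top_toSubalgebra]
  have hfr := IntermediateField.adjoin.finrank hint
  rw [hmin, Polynomial.natDegree_X_pow_sub_C] at hfr
  rw [← IntermediateField.finrank_top' (F := ℚ) (E := K), ← htop, hfr]

private lemma quotChar' {K : Type*} [Field K] [NumberField K] {P : Ideal (𝓞 K)}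
    (hP : P.IsMaximal) (hP0 : P ≠ ⊥) :
    (ringChar ((𝓞 K) ⧸ P)).Prime ∧ ((ringChar ((𝓞 K) ⧸ P) : ℕ) : 𝓞 K) ∈ P ∧
      ringChar ((𝓞 K) ⧸ P) ≤ Ideal.absNorm P := by
  letI := @Fintype.ofFinite _ (Ideal.finiteQuotientOfFreeOfNeBot P hP0)
  haveI : P.IsPrime := hP.isPrime
  haveI : Nontrivial ((𝓞 K) ⧸ P) := Ideal.Quotient.nontrivial_iff.mpr hP.ne_top
  have hprime : (ringChar ((𝓞 K) ⧸ P)).Prime :=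
    CharP.char_is_prime ((𝓞 K) ⧸ P) (ringChar ((𝓞 K) ⧸ P))
  have hmem : ((ringChar ((𝓞 K) ⧸ P) : ℕ) : 𝓞 K) ∈ P := by
    have h0 : ((ringChar ((𝓞 K) ⧸ P) : ℕ) : (𝓞 K) ⧸ P) = 0 := ringChar.Nat.cast_ringChar
    rwa [← map_natCast (Ideal.Quotient.mk P), Ideal.Quotient.eq_zero_iff_mem] at h0
  refine ⟨hprime, hmem, ?_⟩
  have hdvd : ringChar ((𝓞 K) ⧸ P) ∣ Fintype.card ((𝓞 K) ⧸ P) := by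
    have h1 : ringChar ((𝓞 K) ⧸ P) = addOrderOf (1 : (𝓞 K) ⧸ P) :=
      CharP.eq _ (ringChar.charP _) (CharP.addOrderOf_one _)
    rw [h1]
    exact addOrderOf_dvd_card
  rw [Ideal.absNorm_apply, Submodule.cardQuot_apply, Nat.card_eq_fintype_card]
  exact Nat.le_of_dvd Fintype.card_pos hdvd

private lemma le_absNorm_of_mem' {K : Type*} [Field K] [NumberField K] {P : Ideal (𝓞 K)}
    (hP : P.IsPrime) (hP0 : P ≠ ⊥) {p : ℕ} (hp : p.Prime) (hmem : ((p : ℕ) : 𝓞 K) ∈ P) :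
    p ≤ Ideal.absNorm P := by
  have hmax : P.IsMaximal := hP.isMaximal hP0
  obtain ⟨hcp, hcm, hcle⟩ := quotChar' hmax hP0
  letI := @Fintype.ofFinite _ (Ideal.finiteQuotientOfFreeOfNeBot P hP0)
  have hdvd : ringChar ((𝓞 K) ⧸ P) ∣ p := by
    have h0 : ((p : ℕ) : (𝓞 K) ⧸ P) = 0 := by
      rw [← map_natCast (Ideal.Quotient.mk P)]
      exact Ideal.Quotient.eq_zero_iff_mem.mpr hmem
    exact (CharP.cast_eq_zero_iff _ (ringChar _) p).mp h0
  have heq : ringChar ((𝓞 K) ⧸ P) = p :=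
    (hp.eq_one_or_self_of_dvd _ hdvd).resolve_left hcp.ne_one
  exact heq ▸ hcle

open UniqueFactorizationMonoid in
private lemma fiber_card' {K : Type*} [Field K] [NumberField K]
    (h2 : Module.finrank ℚ K = 2) {p : ℕ} (hp : p.Prime) :
    {P : Ideal (𝓞 K) | P.IsMaximal ∧ ((p : ℕ) : 𝓞 K) ∈ P}.Finite ∧
      Nat.card {P : Ideal (𝓞 K) | P.IsMaximal ∧ ((p : ℕ) : 𝓞 K) ∈ P} ≤ 2 := by
  classical
  set I : Ideal (𝓞 K) := Ideal.span {((p : ℕ) : 𝓞 K)} with hIdef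
  have hp0 : ((p : ℕ) : 𝓞 K) ≠ 0 := Nat.cast_ne_zero.mpr hp.ne_zero
  have hI : I ≠ ⊥ := by simpa [hIdef, Ideal.span_singleton_eq_bot] using hp0
  have hsub : {P : Ideal (𝓞 K) | P.IsMaximal ∧ ((p : ℕ) : 𝓞 K) ∈ P} ⊆
      ↑(normalizedFactors I).toFinset := by
    intro P hP
    simp only [Finset.coe_sort_coe, Finset.mem_coe, Multiset.mem_toFinset]
    rw [Ideal.mem_normalizedFactors_iff hI]
    exact ⟨hP.1.isPrime, (Ideal.span_singleton_le_iff_mem _).mpr hP.2⟩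
  have hfin := Set.Finite.subset (Finset.finite_toSet _) hsub
  have hnorm : Ideal.absNorm I = p ^ 2 := by
    have hcast : ((p : ℕ) : 𝓞 K) = algebraMap ℤ (𝓞 K) ((p : ℕ) : ℤ) := by push_cast; rfl
    have hb := Algebra.norm_algebraMap_of_basis (Module.Free.chooseBasis ℤ (𝓞 K)) ((p : ℕ) : ℤ)
    have hcardι : Fintype.card (Module.Free.ChooseBasisIndex ℤ (𝓞 K)) = 2 := by
      rw [← Module.finrank_eq_card_chooseBasisIndex, NumberField.RingOfIntegers.rank, h2]
    rw [hIdef, Ideal.absNorm_span_singleton, hcast, hb, hcardι]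
    simp [Int.natAbs_pow]
  have hmult : ∀ Q ∈ normalizedFactors I, p ≤ Ideal.absNorm Q := by
    intro Q hQ
    obtain ⟨hQp, hQle⟩ := (Ideal.mem_normalizedFactors_iff hI).mp hQ
    have hQ0 : Q ≠ ⊥ := fun h => hI (le_bot_iff.mp (h ▸ hQle))
    exact le_absNorm_of_mem' hQp hQ0 hp (hQle (Ideal.mem_span_singleton_self _))
  have hcard2 : (normalizedFactors I).card ≤ 2 := by
    have hprod : ((normalizedFactors I).map Ideal.absNorm).prod = p ^ 2 := by
      rw [← map_multiset_prod, prod_normalizedFactors_eq_self hI, hnorm]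
    have hle : p ^ (normalizedFactors I).card ≤ p ^ 2 := by
      calc p ^ (normalizedFactors I).card
          = p ^ ((normalizedFactors I).map Ideal.absNorm).card := by rw [Multiset.card_map]
        _ ≤ ((normalizedFactors I).map Ideal.absNorm).prod := by
            apply Multiset.pow_card_le_prod
            intro x hx
            obtain ⟨Q, hQ, rfl⟩ := Multiset.mem_map.mp hx
            exact hmult Q hQ
        _ = p ^ 2 := hprod
    exact (Nat.pow_le_pow_iff_right hp.one_lt).mp hle
  refine ⟨hfin, ?_⟩
  calc Nat.card {P : Ideal (𝓞 K) | P.IsMaximal ∧ ((p : ℕ) : 𝓞 K) ∈ P}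
      ≤ Nat.card ((normalizedFactors I).toFinset : Finset (Ideal (𝓞 K))) := by
        haveI : Finite ((normalizedFactors I).toFinset : Finset (Ideal (𝓞 K))) :=
          FinsetCoe.fintype _ |>.finite
        refine Nat.card_le_card_of_injective (fun x => ⟨x.1, hsub x.2⟩) ?_
        intro x y h
        simp only [Subtype.mk.injEq] at h
        exact Subtype.ext h
    _ = (normalizedFactors I).toFinset.card := by
        rw [Nat.card_eq_fintype_card, Fintype.card_coe]
    _ ≤ (normalizedFactors I).card := Multiset.toFinset_card_le _
    _ ≤ 2 := hcard2


private lemma primes_tsum_le_log {s : ℝ} (hs : 1 < s) (B : Set ℕ) (hB : ∀ p ∈ B, p.Prime) :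
    (∑' p : B, ((p : ℕ) : ℝ) ^ (-s)) ≤ Real.log (s / (s - 1)) := by
  have hsne : -s ≠ 0 := by intro h; linarith [neg_eq_zero.mp h]
  have hZsum : Summable (fun n : ℕ => (n : ℝ) ^ (-s)) :=
    Real.summable_nat_rpow.mpr (by linarith)
  set Z : ℝ := ∑' n : ℕ, (n : ℝ) ^ (-s) with hZ
  have hZ1 : 1 ≤ Z := by
    have h := Summable.le_tsum hZsum 1 (fun j _ => Real.rpow_nonneg (Nat.cast_nonneg j) _)
    simpa using h
  have hZle : Z ≤ s / (s - 1) := by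
    have ht0 : 0 ≤ ZetaAsymptotics.termTSum s :=
      tsum_nonneg fun n => ZetaAsymptotics.term_nonneg _ _
    have heq := ZetaAsymptotics.term_tsum_of_lt hs
    have hZeq : Z = ∑' n : ℕ, 1 / ((n : ℝ) + 1) ^ s := by
      rw [hZ, Summable.tsum_eq_zero_add hZsum, Nat.cast_zero, Real.zero_rpow hsne, zero_add]
      apply tsum_congr
      intro n
      rw [Nat.cast_add, Nat.cast_one, Real.rpow_neg (by positivity), one_div]
    rw [heq] at ht0
    rw [hZeq]
    have hs1' : 0 < s - 1 := by linarith
    have hs0 : 0 < s := by linarith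
    have h1 : (1 : ℝ) / s * (∑' n : ℕ, 1 / ((n : ℝ) + 1) ^ s) ≤ 1 / (s - 1) := by linarith
    calc (∑' n : ℕ, 1 / ((n : ℝ) + 1) ^ s)
        = s * ((1 : ℝ) / s * (∑' n : ℕ, 1 / ((n : ℝ) + 1) ^ s)) := by
          field_simp
      _ ≤ s * (1 / (s - 1)) := mul_le_mul_of_nonneg_left h1 hs0.le
      _ = s / (s - 1) := by rw [mul_one_div]
  set F : ℕ →*₀ ℝ :=
    { toFun := fun n => (n : ℝ) ^ (-s)
      map_zero' := by
        show ((0 : ℕ) : ℝ) ^ (-s) = 0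
        rw [Nat.cast_zero]; exact Real.zero_rpow hsne
      map_one' := by
        show ((1 : ℕ) : ℝ) ^ (-s) = 1
        rw [Nat.cast_one]; exact Real.one_rpow _
      map_mul' := fun m n => by
        show ((m * n : ℕ) : ℝ) ^ (-s) = ((m : ℕ) : ℝ) ^ (-s) * ((n : ℕ) : ℝ) ^ (-s)
        rw [Nat.cast_mul]; exact Real.mul_rpow (Nat.cast_nonneg m) (Nat.cast_nonneg n) }
    with hFdef
  have hFsum : Summable (fun n : ℕ => ‖F n‖) := by
    refine (summable_congr ?_).mpr hZsum
    intro n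
    simp [hFdef, Real.norm_eq_abs, abs_of_nonneg (Real.rpow_nonneg (Nat.cast_nonneg n) _)]
  have hsummand : ∀ p : ℕ, p.Prime → (∑' e : ℕ, F (p ^ e)) = (1 - (p : ℝ) ^ (-s))⁻¹ := by
    intro p hp
    have h1p : (1 : ℝ) < p := by exact_mod_cast hp.one_lt
    have hterm : ∀ e : ℕ, F (p ^ e) = ((p : ℝ) ^ (-s)) ^ e := by
      intro e
      show ((p ^ e : ℕ) : ℝ) ^ (-s) = _
      rw [Nat.cast_pow, ← Real.rpow_natCast ((p : ℝ)) e, ← Real.rpow_mul (by positivity),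
        mul_comm, Real.rpow_mul (by positivity), Real.rpow_natCast]
    rw [tsum_congr hterm,
      tsum_geometric_of_lt_one (Real.rpow_nonneg (by positivity) _)
        (Real.rpow_lt_one_of_one_lt_of_neg h1p (by linarith))]
  have hgsum : Summable (fun p : B => ((p : ℕ) : ℝ) ^ (-s)) := hZsum.subtype B
  refine Summable.tsum_le_of_sum_le hgsum ?_
  intro T
  classical
  set T' : Finset ℕ := T.image Subtype.val with hT'
  have hsumeq : ∑ p ∈ T, ((p : ℕ) : ℝ) ^ (-s) = ∑ p ∈ T', (p : ℝ) ^ (-s) := by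
    rw [hT', Finset.sum_image (fun x _ y _ h => Subtype.ext h)]
  set N : ℕ := T'.sup id + 1 with hN
  have hTsub : T' ⊆ N.primesBelow := by
    intro p hpT
    refine Nat.mem_primesBelow.mpr ⟨Nat.lt_succ_of_le (Finset.le_sup (f := id) hpT), ?_⟩
    obtain ⟨q, hq, rfl⟩ := Finset.mem_image.mp hpT
    exact hB _ q.2
  have hprodpos : ∀ p ∈ N.primesBelow, (0 : ℝ) < (1 - (p : ℝ) ^ (-s))⁻¹ := by
    intro p hp
    have hpp := Nat.prime_of_mem_primesBelow hp
    have h1p : (1 : ℝ) < p := by exact_mod_cast hpp.one_lt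
    have hr1 : (p : ℝ) ^ (-s) < 1 :=
      Real.rpow_lt_one_of_one_lt_of_neg h1p (by linarith)
    exact inv_pos.mpr (by linarith)
  rw [hsumeq]
  have h1mem : (1 : ℕ) ∈ N.smoothNumbers := by
    simp [Nat.mem_smoothNumbers]
  have hsmooth_ge1 : (1 : ℝ) ≤ ∑' m : N.smoothNumbers, F m := by
    have h := Summable.le_tsum (hZsum.subtype _) (⟨1, h1mem⟩ : N.smoothNumbers)
      (fun j _ => Real.rpow_nonneg (Nat.cast_nonneg _) _)
    simp at h; exact h
  calc ∑ p ∈ T', (p : ℝ) ^ (-s)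
      ≤ ∑ p ∈ N.primesBelow, (p : ℝ) ^ (-s) :=
        Finset.sum_le_sum_of_subset_of_nonneg hTsub
          (fun p _ _ => Real.rpow_nonneg (Nat.cast_nonneg p) _)
    _ ≤ ∑ p ∈ N.primesBelow, Real.log ((1 - (p : ℝ) ^ (-s))⁻¹) := by
        apply Finset.sum_le_sum
        intro p hp
        have hpp := Nat.prime_of_mem_primesBelow hp
        have h1p : (1 : ℝ) < p := by exact_mod_cast hpp.one_lt
        have hr1 : (p : ℝ) ^ (-s) < 1 :=
          Real.rpow_lt_one_of_one_lt_of_neg h1p (by linarith)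
        have hpos : (0 : ℝ) < 1 - (p : ℝ) ^ (-s) := by linarith
        rw [Real.log_inv]
        have hlb := Real.log_le_sub_one_of_pos hpos
        linarith
    _ = Real.log (∏ p ∈ N.primesBelow, (1 - (p : ℝ) ^ (-s))⁻¹) :=
        (Real.log_prod (fun p hp => (hprodpos p hp).ne')).symm
    _ = Real.log (∏ p ∈ N.primesBelow, ∑' e : ℕ, F (p ^ e)) := by
        congr 1
        exact Finset.prod_congr rfl
          (fun p hp => (hsummand p (Nat.prime_of_mem_primesBelow hp)).symm)
    _ = Real.log (∑' m : N.smoothNumbers, F m) := by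
        rw [EulerProduct.prod_primesBelow_tsum_eq_tsum_smoothNumbers
          (map_one F) (fun {m n} _ => map_mul F m n) hFsum N]
    _ ≤ Real.log Z := by
        apply Real.log_le_log (by linarith)
        exact Summable.tsum_subtype_le (fun n : ℕ => (n : ℝ) ^ (-s)) _
          (fun n => Real.rpow_nonneg (Nat.cast_nonneg n) _) hZsum
    _ ≤ Real.log (s / (s - 1)) := Real.log_le_log (by linarith) hZle

set_option synthInstance.maxHeartbeats 1000000 in
set_option maxHeartbeats 1000000 in
/-- For K = ℚ(√d) (d squarefree, d ≠ 1) and a ∈ O_K not a square in K: letting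
A be the set of primes P of O_K modulo which a is not a square (of Dirichlet
density 1/2) and B the set of rational primes lying under them, one has
∑_{P∈A} N(P)^{-s} ≤ 2 ∑_{p∈B} p^{-s} for s > 1, whence B has lower Dirichlet
density at least 1/4. -/
theorem nonresidue_primes_density
    (d : ℤ) (hd : Squarefree d) (hd1 : d ≠ 1)
    (K : Type*) [Field K] [NumberField K] (α : K) (hα : α ^ 2 = (d : K))
    (hgen : Algebra.adjoin ℚ {α} = ⊤)
    (a : 𝓞 K) (ha : ¬ IsSquare (algebraMap (𝓞 K) K a))
    (A : Set (Ideal (𝓞 K)))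
    (hA : A = {P : Ideal (𝓞 K) | P.IsMaximal ∧ ¬ IsSquare (Ideal.Quotient.mk P a)})
    (B : Set ℕ)
    (hB : B = {p : ℕ | p.Prime ∧ ∃ P ∈ A, ((p : ℕ) : 𝓞 K) ∈ P})
    (hAdens : Tendsto
      (fun s : ℝ =>
        (∑' P : A, (Ideal.absNorm (P : Ideal (𝓞 K)) : ℝ) ^ (-s)) / Real.log (1 / (s - 1)))
      (nhdsWithin 1 (Set.Ioi 1)) (nhds (1 / 2))) :
    (∀ s : ℝ, 1 < s →
        (∑' P : A, (Ideal.absNorm (P : Ideal (𝓞 K)) : ℝ) ^ (-s)) ≤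
          2 * ∑' p : B, ((p : ℕ) : ℝ) ^ (-s)) ∧
      (1 / 4 : ℝ) ≤ Filter.liminf
        (fun s : ℝ => (∑' p : B, ((p : ℕ) : ℝ) ^ (-s)) / Real.log (1 / (s - 1)))
        (nhdsWithin 1 (Set.Ioi 1)) := by
  have h2 : Module.finrank ℚ K = 2 := finrank_eq_two' d hd hd1 α hα hgen
  -- basic facts about elements of A
  have hAsub : ∀ P : Ideal (𝓞 K), P ∈ A → P.IsMaximal := by
    intro P hP; rw [hA] at hP; exact hP.1
  have hBsub : ∀ p : ℕ, p ∈ B → p.Prime := by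
    intro p hp; rw [hB] at hp; exact hp.1
  have hBin : ∀ p : ℕ, p.Prime → (∃ P ∈ A, ((p : ℕ) : 𝓞 K) ∈ P) → p ∈ B := by
    intro p h1 h2'
    rw [hB]; exact ⟨h1, h2'⟩
  have hAmax : ∀ P : A, (P : Ideal (𝓞 K)).IsMaximal := fun P => hAsub _ P.2
  have hne : ∀ P : A, (P : Ideal (𝓞 K)) ≠ ⊥ := by
    intro P hbot
    have hmax := hAmax P
    rw [hbot] at hmax
    exact RingOfIntegers.not_isField K
      (((RingEquiv.quotientBot (𝓞 K)).symm.toMulEquiv).isField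
        ((Ideal.Quotient.maximal_ideal_iff_isField_quotient _).mp hmax))
  -- the map from A to B
  have hπmem : ∀ P : A, ringChar ((𝓞 K) ⧸ (P : Ideal (𝓞 K))) ∈ B := by
    intro P
    obtain ⟨h1, hm, h3⟩ := quotChar' (hAmax P) (hne P)
    exact hBin _ h1 ⟨P, P.2, hm⟩
  set π : A → B := fun P => ⟨ringChar ((𝓞 K) ⧸ (P : Ideal (𝓞 K))), hπmem P⟩ with hπ
  have hBprime : ∀ q : B, (q : ℕ).Prime := fun q => hBsub _ q.2
  -- part 1
  have hmain : ∀ s : ℝ, 1 < s →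
      (∑' P : A, (Ideal.absNorm (P : Ideal (𝓞 K)) : ℝ) ^ (-s)) ≤
        2 * ∑' p : B, ((p : ℕ) : ℝ) ^ (-s) := by
    intro s hs
    set F : A → ℝ≥0∞ :=
      fun P => ENNReal.ofReal ((Ideal.absNorm (P : Ideal (𝓞 K)) : ℝ) ^ (-s)) with hF
    set G : B → ℝ≥0∞ := fun q => ENNReal.ofReal (((q : ℕ) : ℝ) ^ (-s)) with hG
    have hf0 : ∀ P : A, 0 ≤ (Ideal.absNorm (P : Ideal (𝓞 K)) : ℝ) ^ (-s) :=
      fun P => Real.rpow_nonneg (Nat.cast_nonneg _) _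
    have hg0 : ∀ q : B, 0 ≤ ((q : ℕ) : ℝ) ^ (-s) :=
      fun q => Real.rpow_nonneg (Nat.cast_nonneg _) _
    have hgsum : Summable (fun q : B => ((q : ℕ) : ℝ) ^ (-s)) := by
      have h := (Real.summable_nat_rpow (p := -s)).mpr (by linarith)
      exact h.subtype B
    have hFG : ∀ P : A, F P ≤ G (π P) := by
      intro P
      apply ENNReal.ofReal_le_ofReal
      have hq := quotChar' (hAmax P) (hne P)
      have hpos : (0 : ℝ) < (ringChar ((𝓞 K) ⧸ (P : Ideal (𝓞 K))) : ℝ) :=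
        Nat.cast_pos.mpr hq.1.pos
      have hle : ((ringChar ((𝓞 K) ⧸ (P : Ideal (𝓞 K))) : ℕ) : ℝ) ≤
          (Ideal.absNorm (P : Ideal (𝓞 K)) : ℝ) := Nat.cast_le.mpr hq.2.2
      exact Real.rpow_le_rpow_of_nonpos hpos hle (by linarith)
    -- fiberwise bound
    have hfiber : ∀ q : B, (∑' _ : {P : A // π P = q}, G q) ≤ 2 * G q := by
      intro q
      obtain ⟨hSfin, hScard⟩ := fiber_card' h2 (hBprime q)
      haveI hSfin' : Finite {P : Ideal (𝓞 K) | P.IsMaximal ∧ ((q : ℕ) : 𝓞 K) ∈ P} :=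
        hSfin.to_subtype
      have hmemS : ∀ P : {P : A // π P = q},
          (P.1 : Ideal (𝓞 K)) ∈ {P : Ideal (𝓞 K) | P.IsMaximal ∧ ((q : ℕ) : 𝓞 K) ∈ P} := by
        intro P
        have hchar : ringChar ((𝓞 K) ⧸ (P.1 : Ideal (𝓞 K))) = (q : ℕ) :=
          congrArg Subtype.val P.2
        refine ⟨hAmax P.1, ?_⟩
        rw [← hchar]
        exact (quotChar' (hAmax P.1) (hne P.1)).2.1
      have hinj : Function.Injective
          (fun P : {P : A // π P = q} =>
            (⟨(P.1 : Ideal (𝓞 K)), hmemS P⟩ :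
              {P : Ideal (𝓞 K) | P.IsMaximal ∧ ((q : ℕ) : 𝓞 K) ∈ P})) := by
        intro x y h
        simp only [Subtype.mk.injEq] at h
        exact Subtype.ext (Subtype.ext h)
      haveI : Finite {P : A // π P = q} := Finite.of_injective _ hinj
      have hcard : Nat.card {P : A // π P = q} ≤ 2 :=
        le_trans (Nat.card_le_card_of_injective _ hinj) hScard
      haveI := Fintype.ofFinite {P : A // π P = q}
      rw [tsum_fintype, Finset.sum_const, Finset.card_univ, nsmul_eq_mul]
      apply mul_le_mul_left
      have : (Fintype.card {P : A // π P = q} : ℝ≥0∞) ≤ (2 : ℕ) := by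
        rw [← Nat.card_eq_fintype_card]
        exact_mod_cast hcard
      simpa using this
    have hkey : (∑' P : A, F P) ≤ 2 * ∑' q : B, G q := by
      calc (∑' P : A, F P) ≤ ∑' P : A, G (π P) := ENNReal.tsum_le_tsum hFG
        _ = ∑' x : Σ q : B, {P : A // π P = q}, G (π ((Equiv.sigmaFiberEquiv π) x)) :=
            ((Equiv.sigmaFiberEquiv π).tsum_eq (fun P => G (π P))).symm
        _ = ∑' x : Σ q : B, {P : A // π P = q}, G x.1 := by
            apply tsum_congr
            rintro ⟨q, P, hPq⟩
            simp [Equiv.sigmaFiberEquiv, hPq]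
        _ = ∑' q : B, ∑' _ : {P : A // π P = q}, G q :=
            ENNReal.tsum_sigma' (fun x => G x.1)
        _ ≤ ∑' q : B, 2 * G q := ENNReal.tsum_le_tsum hfiber
        _ = 2 * ∑' q : B, G q := ENNReal.tsum_mul_left
    have hGeq : (∑' q : B, G q) = ENNReal.ofReal (∑' q : B, ((q : ℕ) : ℝ) ^ (-s)) :=
      (ENNReal.ofReal_tsum_of_nonneg hg0 hgsum).symm
    have hrhs_ne : (2 : ℝ≥0∞) * ∑' q : B, G q ≠ ⊤ := by
      rw [hGeq]
      exact ENNReal.mul_ne_top (by norm_num) ENNReal.ofReal_ne_top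
    have hFfin : (∑' P : A, F P) ≠ ⊤ := ne_top_of_le_ne_top hrhs_ne hkey
    have hFsum : Summable (fun P : A => (Ideal.absNorm (P : Ideal (𝓞 K)) : ℝ) ^ (-s)) := by
      have h := ENNReal.summable_toReal hFfin
      refine (summable_congr ?_).mp h
      intro P
      simp [hF, ENNReal.toReal_ofReal (hf0 P)]
    have hofreal : ENNReal.ofReal (∑' P : A, (Ideal.absNorm (P : Ideal (𝓞 K)) : ℝ) ^ (-s)) ≤
        ENNReal.ofReal (2 * ∑' q : B, ((q : ℕ) : ℝ) ^ (-s)) := by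
      rw [ENNReal.ofReal_tsum_of_nonneg hf0 hFsum]
      calc (∑' P : A, F P) ≤ 2 * ∑' q : B, G q := hkey
        _ = ENNReal.ofReal (2 * ∑' q : B, ((q : ℕ) : ℝ) ^ (-s)) := by
            rw [hGeq, ENNReal.ofReal_mul (by norm_num : (0:ℝ) ≤ 2)]
            norm_num
    exact (ENNReal.ofReal_le_ofReal_iff
      (mul_nonneg (by norm_num) (tsum_nonneg hg0))).mp hofreal
  refine ⟨hmain, ?_⟩
  -- part 2
  set w : ℝ → ℝ := fun s =>
    (∑' P : A, (Ideal.absNorm (P : Ideal (𝓞 K)) : ℝ) ^ (-s)) / Real.log (1 / (s - 1)) with hw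
  set v : ℝ → ℝ := fun s =>
    (∑' p : B, ((p : ℕ) : ℝ) ^ (-s)) / Real.log (1 / (s - 1)) with hv
  have hev : ∀ᶠ s in nhdsWithin 1 (Set.Ioi 1),
      (1 / 2 : ℝ) * w s ≤ v s ∧ 0 ≤ v s := by
    filter_upwards [Ioo_mem_nhdsGT_of_mem (Set.left_mem_Ico.mpr one_lt_two)] with s hs
    obtain ⟨hs1, hs2⟩ := hs
    have hlog : 0 < Real.log (1 / (s - 1)) :=
      Real.log_pos (one_lt_one_div (by linarith) (by linarith))
    have h1 := hmain s hs1
    have hBnn : 0 ≤ ∑' p : B, ((p : ℕ) : ℝ) ^ (-s) :=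
      tsum_nonneg fun q => Real.rpow_nonneg (Nat.cast_nonneg _) _
    refine ⟨?_, div_nonneg hBnn hlog.le⟩
    have heq : (1 / 2 : ℝ) * w s =
        ((∑' P : A, (Ideal.absNorm (P : Ideal (𝓞 K)) : ℝ) ^ (-s)) / 2) /
          Real.log (1 / (s - 1)) := by
      rw [hw]; ring
    rw [heq, hv]
    exact (div_le_div_iff_of_pos_right hlog).mpr (by linarith)
  have htendu : Tendsto (fun s => (1 / 2 : ℝ) * w s) (nhdsWithin 1 (Set.Ioi 1))
      (nhds ((1 / 2 : ℝ) * (1 / 2))) := hAdens.const_mul (1 / 2 : ℝ)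
  have h14 : (1 / 2 : ℝ) * (1 / 2) = 1 / 4 := by norm_num
  rw [h14] at htendu
  have hlimu : liminf (fun s => (1 / 2 : ℝ) * w s) (nhdsWithin 1 (Set.Ioi 1)) = 1 / 4 :=
    htendu.liminf_eq
  have hvb : ∀ᶠ s in nhdsWithin 1 (Set.Ioi 1), v s ≤ 2 := by
    have hmem1 : (1 : ℝ) ∈ Set.Ico (1 : ℝ) (1 + Real.exp (-1)) :=
      Set.left_mem_Ico.mpr (by linarith [Real.exp_pos (-1)])
    filter_upwards [Ioo_mem_nhdsGT_of_mem hmem1] with s hs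
    obtain ⟨hs1, hs2⟩ := hs
    have hs1' : 0 < s - 1 := by linarith
    have hexpneg : Real.exp (-1) < 1 := by
      calc Real.exp (-1) < Real.exp 0 := Real.exp_lt_exp.mpr (by norm_num)
        _ = 1 := Real.exp_zero
    have hlog1 : 1 ≤ Real.log (1 / (s - 1)) := by
      rw [Real.le_log_iff_exp_le (by positivity)]
      have h1 : Real.exp 1 = 1 / Real.exp (-1) := by
        rw [Real.exp_neg, one_div, inv_inv]
      rw [h1]
      apply one_div_le_one_div_of_le hs1'
      linarith
    have hble := primes_tsum_le_log hs1 B (fun p hp => hBsub p hp)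
    have hlogsplit : Real.log (s / (s - 1)) =
        Real.log s + Real.log (1 / (s - 1)) := by
      rw [Real.log_div (by linarith) (by linarith),
        Real.log_div one_ne_zero (by linarith), Real.log_one]
      ring
    have hlogs : Real.log s ≤ 1 := by
      have h := Real.log_le_sub_one_of_pos (show (0:ℝ) < s by linarith)
      linarith
    have hL : 0 < Real.log (1 / (s - 1)) := by linarith
    rw [hv]
    simp only
    rw [div_le_iff₀ hL]
    linarith [hble, hlogsplit]
  rw [← hlimu]
  refine Filter.liminf_le_liminf (hev.mono fun s h => h.1) ?_ ?_
  · exact htendu.isBoundedUnder_ge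
  · exact Filter.IsBounded.isCobounded_ge ⟨2, eventually_map.mpr hvb⟩
end

section
/- Let γ = [[a, b], [c, d]] ∈ SL(2, ℂ) with c ≠ 0 and a + d ≠ 0, acting on ℂ by Möbius transformation, and let D be a line in ℂ. If γ(D) = D (as a subset of ℂ ∪ {∞}, with the line D not passing through the pole -d/c being impossible since γ⁻¹(∞) ∈ D), then a/c ∈ D, -d/c ∈ D, and (a+d)² ∈ ℝ. Conversely, if a/c ∈ D, -d/c ∈ D, D = {z ∈ ℂ : Im(cz/(a+d)) = Im(a/(a+d))}, and (a+d)² ∈ ℝ, then γ(D) = D. -/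
/-!
The identity `γ z - a/c = -1 / (c (c z + d))` drives everything. On the line `L` through `a/c`
and `-d/c`, in the coordinate `z = a/c + t (a + d)/c`, it says that `γ` acts by
`t ↦ -1 / ((t + 1) (a + d)²)`. So when `(a + d)²` is real, `γ` maps `L \ {-d/c}` into
`L \ {a/c}`; so does `γ⁻¹`, with the roles of the two points swapped, and hence `γ(L) = L`.

Conversely, if `γ(D) = D` then `a/c = γ(∞) ∈ D`; write `D = a/c + ℝ w`. That `γ(a/c)` and
`γ(a/c + w)` lie on `D` says that `c w (a + d)` and `(c w)²` are real (if `a/c + w` is the pole,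
then `c w = -(a + d)` and the first fact suffices). Hence `w ∈ ℝ (a + d)/c`, i.e. `D = L`, and
`(a + d)² = (c w (a + d))² / (c w)²` is real.
-/

open Set

theorem Complex.im_inv_eq_zero_iff {x : ℂ} : x⁻¹.im = 0 ↔ x.im = 0 := by
  rw [inv_im, neg_div, neg_eq_zero, div_eq_zero_iff, normSq_eq_zero]
  exact ⟨fun h => h.elim id (fun hx => hx ▸ zero_im), Or.inl⟩

def realLine (p v : ℂ) : Set ℂ := {z | ∃ t : ℝ, z = p + t * v}

theorem realLine_eq_setOf_im {p v : ℂ} (hv : v ≠ 0) :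
    realLine p v = {z | ((z - p) / v).im = 0} := by
  ext z
  constructor
  · rintro ⟨t, rfl⟩
    simp [hv]
  · intro (h : ((z - p) / v).im = 0)
    refine ⟨((z - p) / v).re, ?_⟩
    rw [show (((z - p) / v).re : ℂ) = (z - p) / v from Complex.ext (by simp) (by simp [h])]
    field_simp
    ring

theorem realLine_eq_of_mem {p q v : ℂ} (hq : q ∈ realLine p v) :
    realLine p v = realLine q v := by
  obtain ⟨s, rfl⟩ := hq
  ext z
  constructor
  · rintro ⟨t, rfl⟩
    exact ⟨t - s, by push_cast; ring⟩
  · rintro ⟨t, rfl⟩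
    exact ⟨s + t, by push_cast; ring⟩

theorem realLine_eq_of_im_div_eq_zero {p v w : ℂ} (hv : v ≠ 0) (hw : w ≠ 0)
    (h : (v / w).im = 0) :
    realLine p v = realLine p w := by
  have hr : (((v / w).re : ℝ) : ℂ) = v / w := Complex.ext (by simp) (by simp [h])
  have hr0 : (v / w).re ≠ 0 := by
    intro h0
    rw [h0, Complex.ofReal_zero, eq_comm, div_eq_zero_iff] at hr
    tauto
  rw [realLine_eq_setOf_im hv, realLine_eq_setOf_im hw]
  ext z
  rw [mem_ofPred, mem_ofPred, show (z - p) / w = (z - p) / v * (v / w) by field_simp, ← hr,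
    Complex.mul_im, Complex.ofReal_re, Complex.ofReal_im, mul_zero, zero_add, mul_eq_zero,
    or_iff_left hr0]

noncomputable def mobius (a b c d z : ℂ) : ℂ := (a * z + b) / (c * z + d)

section

variable {a b c d : ℂ}

theorem mobius_sub_div (hdet : a * d - b * c = 1) (hc : c ≠ 0) {z : ℂ} (hz : c * z + d ≠ 0) :
    mobius a b c d z - a / c = -1 / (c * (c * z + d)) := by
  rw [mobius, div_sub_div _ _ hz hc]
  congr 1
  · linear_combination -hdet
  · ring

theorem mobius_ne_div (hdet : a * d - b * c = 1) (hc : c ≠ 0) {z : ℂ} (hz : c * z + d ≠ 0) :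
    mobius a b c d z ≠ a / c := by
  rw [← sub_ne_zero, mobius_sub_div hdet hc hz]
  exact div_ne_zero (by norm_num) (mul_ne_zero hc hz)

theorem mobius_mobius_inv (hdet : a * d - b * c = 1) (hc : c ≠ 0) {z : ℂ} (hz : z ≠ a / c) :
    mobius a b c d (mobius d (-b) (-c) a z) = z := by
  have hz' : -c * z + a ≠ 0 := by
    contrapose! hz
    field_simp
    linear_combination -hz
  rw [mobius, mobius, mul_div_assoc', mul_div_assoc', div_add' _ _ _ hz', div_add' _ _ _ hz',
    div_div_div_cancel_right₀ hz', show c * (d * z + -b) + d * (-c * z + a) = 1 by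
      linear_combination hdet, div_one]
  linear_combination z * hdet

/-- The line through `γ ∞ = a / c` and the pole `γ⁻¹ ∞ = -d / c` (at parameter `-1`). -/
def poleLine (a c d : ℂ) : Set ℂ := realLine (a / c) ((a + d) / c)

theorem div_mem_poleLine : a / c ∈ poleLine a c d := ⟨0, by simp⟩

theorem neg_div_mem_poleLine : -d / c ∈ poleLine a c d := ⟨-1, by push_cast; ring⟩

theorem poleLine_inv : poleLine d (-c) a = poleLine a c d := by
  ext z
  constructor <;> rintro ⟨t, rfl⟩ <;> exact ⟨-1 - t, by push_cast; ring⟩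

theorem poleLine_eq_setOf_im (hc : c ≠ 0) (htr : a + d ≠ 0) :
    poleLine a c d = {z | (c * z / (a + d)).im = (a / (a + d)).im} := by
  rw [poleLine, realLine_eq_setOf_im (div_ne_zero htr hc)]
  ext z
  rw [mem_ofPred, mem_ofPred, ← sub_eq_zero (a := (c * z / (a + d)).im), ← Complex.sub_im,
    ← sub_div]
  congr! 2
  field_simp

theorem mobius_mapsTo_poleLine (hdet : a * d - b * c = 1) (hc : c ≠ 0) (htr : a + d ≠ 0)
    (hsq : ((a + d) ^ 2).im = 0) :
    MapsTo (mobius a b c d) (poleLine a c d \ {-d / c}) (poleLine a c d \ {a / c}) := by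
  rintro z ⟨⟨t, rfl⟩, hz⟩
  have hden : c * (a / c + t * ((a + d) / c)) + d = (t + 1) * (a + d) := by
    field_simp
    ring
  have hden0 : c * (a / c + t * ((a + d) / c)) + d ≠ 0 := by
    rw [hden]
    refine mul_ne_zero (fun ht => hz ?_) htr
    rw [show (t : ℂ) = -1 by linear_combination ht]
    simp only [mem_singleton_iff]
    ring
  refine ⟨?_, mobius_ne_div hdet hc hden0⟩
  rw [poleLine, realLine_eq_setOf_im (div_ne_zero htr hc), mem_ofPred, mobius_sub_div hdet hc hden0,
    hden, show -1 / (c * ((t + 1) * (a + d))) / ((a + d) / c) = -((t + 1) * (a + d) ^ 2)⁻¹ by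
      field_simp, Complex.neg_im, neg_eq_zero, Complex.im_inv_eq_zero_iff]
  simp [Complex.mul_im, hsq]

theorem mobius_image_poleLine (hdet : a * d - b * c = 1) (hc : c ≠ 0) (htr : a + d ≠ 0)
    (hsq : ((a + d) ^ 2).im = 0) :
    mobius a b c d '' (poleLine a c d \ {-d / c}) ∪ {a / c} = poleLine a c d := by
  refine Subset.antisymm (union_subset ?_ (singleton_subset_iff.2 div_mem_poleLine)) fun z hz => ?_
  · exact (mobius_mapsTo_poleLine hdet hc htr hsq).image_subset.trans sdiff_subset
  by_cases hza : z = a / c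
  · exact Or.inr hza
  -- `γ⁻¹ = mobius d (-b) (-c) a` has the same pole line, with `a / c` and `-d / c` swapped.
  have hinv := mobius_mapsTo_poleLine (a := d) (b := -b) (c := -c) (d := a)
    (by linear_combination hdet) (neg_ne_zero.2 hc) (by rwa [add_comm]) (by rwa [add_comm])
  rw [poleLine_inv, neg_div_neg_eq, div_neg, ← neg_div] at hinv
  exact Or.inl ⟨_, hinv ⟨hz, hza⟩, mobius_mobius_inv hdet hc hza⟩

theorem realLine_eq_poleLine_of_mapsTo (hdet : a * d - b * c = 1) (hc : c ≠ 0) (htr : a + d ≠ 0)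
    {w : ℂ} (hw : w ≠ 0)
    (hmaps : MapsTo (mobius a b c d) (realLine (a / c) w \ {-d / c}) (realLine (a / c) w)) :
    realLine (a / c) w = poleLine a c d ∧ ((a + d) ^ 2).im = 0 := by
  have hreal : ∀ t : ℝ, a / c + t * w ≠ -d / c →
      (c * w * (a + d + t * (c * w))).im = 0 := by
    intro t ht
    have hden : c * (a / c + t * w) + d ≠ 0 := by
      contrapose! ht
      rw [eq_div_iff hc]
      linear_combination ht
    have h := hmaps ⟨⟨t, rfl⟩, ht⟩
    rwa [realLine_eq_setOf_im hw, mem_ofPred, mobius_sub_div hdet hc hden,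
      show -1 / (c * (c * (a / c + t * w) + d)) / w = -(c * w * (a + d + t * (c * w)))⁻¹ by
        field_simp; ring, Complex.neg_im, neg_eq_zero, Complex.im_inv_eq_zero_iff] at h
  have hpole : a / c ≠ -d / c := by
    intro h
    field_simp at h
    exact htr (by linear_combination h)
  have hWs : (c * w * (a + d)).im = 0 := by simpa using hreal 0 (by simpa using hpole)
  have hWW : ((c * w) ^ 2).im = 0 := by
    by_cases h1 : a / c + ((1 : ℝ) : ℂ) * w = -d / c
    · rw [Complex.ofReal_one, one_mul, ← eq_sub_iff_add_eq', div_sub_div_same, ← neg_add',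
        eq_div_iff hc, mul_comm, add_comm d] at h1
      rw [h1, neg_mul, Complex.neg_im, neg_eq_zero] at hWs
      rwa [h1, neg_sq, sq]
    · have h := hreal 1 h1
      rwa [show c * w * (a + d + ((1 : ℝ) : ℂ) * (c * w)) = c * w * (a + d) + (c * w) ^ 2 by
        push_cast; ring, Complex.add_im, hWs, zero_add] at h
  rw [← Complex.conj_eq_iff_im] at hWs hWW ⊢
  refine ⟨realLine_eq_of_im_div_eq_zero hw (div_ne_zero htr hc) ?_, ?_⟩
  · rw [← Complex.conj_eq_iff_im,
      show w / ((a + d) / c) = (c * w) ^ 2 / (c * w * (a + d)) by field_simp, map_div₀, hWs, hWW]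
  · rw [show (a + d) ^ 2 = (c * w * (a + d)) ^ 2 / (c * w) ^ 2 by field_simp,
      map_div₀, map_pow, hWs, hWW]

end

/-- Invariance of a line D ⊂ ℂ under a Möbius transformation γ ∈ SL(2,ℂ) with
c ≠ 0 and a + d ≠ 0: γ(D) = D (as subsets of ℙ¹(ℂ)) iff a/c ∈ D, -d/c ∈ D,
D = {z : Im(cz/(a+d)) = Im(a/(a+d))} and (a+d)² ∈ ℝ. -/
theorem mobius_line_invariance
    (a b c d : ℂ) (hdet : a * d - b * c = 1) (hc : c ≠ 0) (htr : a + d ≠ 0)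
    (D : Set ℂ)
    (hD : ∃ z₀ w : ℂ, w ≠ 0 ∧ D = {z : ℂ | ∃ t : ℝ, z = z₀ + (t : ℂ) * w}) :
    (((fun z : ℂ => (a * z + b) / (c * z + d)) '' (D \ {-d / c}) ∪ {a / c} = D) →
        (a / c ∈ D ∧ -d / c ∈ D ∧
          D = {z : ℂ | (c * z / (a + d)).im = (a / (a + d)).im} ∧ ((a + d) ^ 2).im = 0)) ∧
      ((a / c ∈ D ∧ -d / c ∈ D ∧
          D = {z : ℂ | (c * z / (a + d)).im = (a / (a + d)).im} ∧ ((a + d) ^ 2).im = 0) →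
        (fun z : ℂ => (a * z + b) / (c * z + d)) '' (D \ {-d / c}) ∪ {a / c} = D) := by
  obtain ⟨z₀, w, hw, hD⟩ := hD
  change D = realLine z₀ w at hD
  rw [show (fun z : ℂ => (a * z + b) / (c * z + d)) = mobius a b c d from rfl,
    ← poleLine_eq_setOf_im hc htr]
  refine ⟨fun h => ?_,
    fun ⟨_, _, hDpole, hsq⟩ => hDpole ▸ mobius_image_poleLine hdet hc htr hsq⟩
  have ha : a / c ∈ D := h ▸ Or.inr rfl
  rw [hD, realLine_eq_of_mem (hD ▸ ha)] at h ⊢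
  obtain ⟨hDpole, hsq⟩ := realLine_eq_poleLine_of_mapsTo hdet hc htr hw
    fun z hz => h ▸ Or.inl (mem_image_of_mem _ hz)
  rw [hDpole]
  exact ⟨div_mem_poleLine, neg_div_mem_poleLine, rfl, hsq⟩
end

section
/- Let a < 0 be squarefree, b a prime with b ≠ 3, b ∤ a. Suppose there exist rational numbers x, y, z, t with (x² - a y²) - b(z² - a t²) = 1 and 2x ∈ {-1, 0, 1}. Then one of a, -a, -3a is a quadratic residue modulo b. -/
/-!
For `x = 0` the norm equation reads `1 + a y² + b (z² - a t²) = 0`, and for `2x = ±1`, after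
multiplying by 4, `3 + a (2y)² + b ((2z)² - a (2t)²) = 0`. So it suffices to show that a nonzero
integer solution of `c U² + a V² + p (Z² - a T²) = 0`, with `p ∤ c`, forces `a` or `-c a` to be a
square mod `p`. Modulo `p`, `c U² + a V² ≡ 0`, so either `V` is a unit and `-c a ≡ (c U / V)²`, or
`p ∣ U, V`; dividing by `p`, `Z² - a T² ≡ 0`, so either `a ≡ (Z / T)²` or `p ∣ Z, T`. In the last
case `(U, V, Z, T) / p` is again a solution, and infinite descent ends the argument.
-/

theorem isSquare_neg_mul_of_mul_sq_add_mul_sq_eq_zero {F : Type*} [Field F] {c a u v : F}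
    (h : c * u ^ 2 + a * v ^ 2 = 0) (hv : v ≠ 0) : IsSquare (-c * a) :=
  ⟨c * u / v, by field_simp; linear_combination (-c) * h⟩

theorem eq_zero_and_eq_zero_of_mul_sq_add_mul_sq_eq_zero {F : Type*} [Field F] {c a u v : F}
    (hc : c ≠ 0) (hca : ¬IsSquare (-c * a)) (h : c * u ^ 2 + a * v ^ 2 = 0) : u = 0 ∧ v = 0 := by
  have hv : v = 0 := by
    by_contra hv
    exact hca (isSquare_neg_mul_of_mul_sq_add_mul_sq_eq_zero h hv)
  subst hv
  have hu : c * u ^ 2 = 0 := by simpa using h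
  exact ⟨pow_eq_zero_iff two_ne_zero |>.mp ((mul_eq_zero.mp hu).resolve_left hc), rfl⟩

theorem Rat.exists_int_eq_mul_of_den_dvd {r : ℚ} {n : ℕ} (h : r.den ∣ n) :
    ∃ k : ℤ, (k : ℚ) = r * n := by
  obtain ⟨m, rfl⟩ := h
  exact ⟨r.num * m, by push_cast; rw [← Rat.mul_den_eq_num]; ring⟩

namespace ZMod

variable {p : ℕ} [Fact p.Prime] {c a : ℤ}

theorem cast_mul_sq_add_mul_sq_eq_zero {U V W : ℤ} (h : c * U ^ 2 + a * V ^ 2 + p * W = 0) :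
    (c : ZMod p) * (U : ZMod p) ^ 2 + a * (V : ZMod p) ^ 2 = 0 := by
  simpa using congrArg (Int.cast : ℤ → ZMod p) h

theorem dvd_and_dvd_of_not_isSquare {U V W : ℤ} (hc : (c : ZMod p) ≠ 0)
    (hca : ¬IsSquare (-(c : ZMod p) * a)) (h : c * U ^ 2 + a * V ^ 2 + p * W = 0) :
    (p : ℤ) ∣ U ∧ (p : ℤ) ∣ V := by
  obtain ⟨hU, hV⟩ :=
    eq_zero_and_eq_zero_of_mul_sq_add_mul_sq_eq_zero hc hca (cast_mul_sq_add_mul_sq_eq_zero h)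
  exact ⟨(intCast_zmod_eq_zero_iff_dvd U p).mp hU, (intCast_zmod_eq_zero_iff_dvd V p).mp hV⟩

theorem exists_eq_mul_of_not_isSquare (hc : (c : ZMod p) ≠ 0) (ha : ¬IsSquare (a : ZMod p))
    (hca : ¬IsSquare (-(c : ZMod p) * a)) {U V Z T : ℤ}
    (h : c * U ^ 2 + a * V ^ 2 + p * (Z ^ 2 - a * T ^ 2) = 0) :
    ∃ U' V' Z' T' : ℤ, c * U' ^ 2 + a * V' ^ 2 + p * (Z' ^ 2 - a * T' ^ 2) = 0 ∧ U = p * U' := by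
  have hp : (p : ℤ) ≠ 0 := by exact_mod_cast (Fact.out : p.Prime).ne_zero
  obtain ⟨⟨U', rfl⟩, ⟨V', rfl⟩⟩ := dvd_and_dvd_of_not_isSquare hc hca h
  -- `Z² - a T²` is the form `c U² + a V²` with `c = -1`, for which `-c a = a`.
  have hZT : (-1) * Z ^ 2 + a * T ^ 2 + p * (-(c * U' ^ 2 + a * V' ^ 2)) = 0 := by
    refine mul_left_cancel₀ hp ?_
    linear_combination -h
  obtain ⟨⟨Z', rfl⟩, ⟨T', rfl⟩⟩ :=
    dvd_and_dvd_of_not_isSquare (c := -1) (by simp) (by simpa using ha) hZT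
  refine ⟨U', V', Z', T', mul_left_cancel₀ (pow_ne_zero 2 hp) ?_, rfl⟩
  linear_combination h

theorem isSquare_or_isSquare_of_int (hc : (c : ZMod p) ≠ 0) {U V Z T : ℤ} (hU : U ≠ 0)
    (h : c * U ^ 2 + a * V ^ 2 + p * (Z ^ 2 - a * T ^ 2) = 0) :
    IsSquare (a : ZMod p) ∨ IsSquare (-(c : ZMod p) * a) := by
  by_contra! hns
  obtain ⟨ha, hca⟩ := hns
  induction hn : U.natAbs using Nat.strong_induction_on generalizing U V Z T with
  | _ n ih =>
  obtain ⟨U', V', Z', T', h', rfl⟩ := exists_eq_mul_of_not_isSquare hc ha hca h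
  have hU' : U' ≠ 0 := right_ne_zero_of_mul hU
  refine ih U'.natAbs ?_ hU' h' rfl
  rw [← hn, Int.natAbs_mul, Int.natAbs_natCast]
  exact lt_mul_left (Int.natAbs_pos.mpr hU') (Fact.out : p.Prime).one_lt

theorem isSquare_or_isSquare_of_rat (hc : (c : ZMod p) ≠ 0) {V Z T : ℚ}
    (h : c + a * V ^ 2 + p * (Z ^ 2 - a * T ^ 2) = 0) :
    IsSquare (a : ZMod p) ∨ IsSquare (-(c : ZMod p) * a) := by
  set d := V.den * Z.den * T.den
  obtain ⟨V', hV⟩ := Rat.exists_int_eq_mul_of_den_dvd (r := V) (n := d) ⟨Z.den * T.den, by ring⟩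
  obtain ⟨Z', hZ⟩ := Rat.exists_int_eq_mul_of_den_dvd (r := Z) (n := d) ⟨V.den * T.den, by ring⟩
  obtain ⟨T', hT⟩ := Rat.exists_int_eq_mul_of_den_dvd (r := T) (n := d) ⟨V.den * Z.den, by ring⟩
  have hQ : (c : ℚ) * (d : ℤ) ^ 2 + a * (V' : ℚ) ^ 2 + p * ((Z' : ℚ) ^ 2 - a * (T' : ℚ) ^ 2) = 0 := by
    rw [hV, hZ, hT]
    linear_combination (d : ℚ) ^ 2 * h
  exact isSquare_or_isSquare_of_int hc (U := d) (by positivity) (by exact_mod_cast hQ)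

end ZMod

theorem elliptic_implies_square_general
    (a : ℤ)
    (b : ℕ) (hb : b.Prime) (hb3 : b ≠ 3)
    (x y z t : ℚ)
    (heq : (x ^ 2 - (a : ℚ) * y ^ 2) - (b : ℚ) * (z ^ 2 - (a : ℚ) * t ^ 2) = 1)
    (htr : 2 * x = -1 ∨ 2 * x = 0 ∨ 2 * x = 1) :
    IsSquare ((a : ZMod b)) ∨ IsSquare (((-a : ℤ) : ZMod b)) ∨
      IsSquare (((-3 * a : ℤ) : ZMod b)) := by
  have := Fact.mk hb
  have hx : x = 0 ∨ 4 * x ^ 2 = 1 := by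
    rcases htr with hx | hx | hx
    · right; linear_combination (2 * x - 1) * hx
    · left; linarith
    · right; linear_combination (2 * x + 1) * hx
  rcases hx with hx | hx
  · have := ZMod.isSquare_or_isSquare_of_rat (p := b) (a := a) (c := 1) (V := y) (Z := z) (T := t)
      (by rw [Int.cast_one]; exact one_ne_zero) (by subst hx; push_cast; linear_combination -heq)
    push_cast [neg_one_mul] at this ⊢
    tauto
  · have h3 : ((3 : ℤ) : ZMod b) ≠ 0 := by
      rw [Ne, ZMod.intCast_zmod_eq_zero_iff_dvd]
      exact_mod_cast fun h => hb3 ((Nat.prime_dvd_prime_iff_eq hb Nat.prime_three).mp h)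
    have := ZMod.isSquare_or_isSquare_of_rat (p := b) (a := a) (V := 2 * y) (Z := 2 * z)
      (T := 2 * t) h3 (by push_cast; linear_combination (-4) * heq + hx)
    push_cast at this ⊢
    tauto

/-- Elliptic elements in the unit group of an order in (a,b/ℚ): if the norm
equation (x² - a y²) - b(z² - a t²) = 1 has a rational solution with
2x ∈ {-1,0,1}, then one of a, -a, -3a is a quadratic residue modulo b. -/
theorem elliptic_implies_square
    (a : ℤ) (hsf : Squarefree a) (hneg : a < 0)
    (b : ℕ) (hb : b.Prime) (hb3 : b ≠ 3) (hba : ¬ ((b : ℤ) ∣ a))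
    (x y z t : ℚ)
    (heq : (x ^ 2 - (a : ℚ) * y ^ 2) - (b : ℚ) * (z ^ 2 - (a : ℚ) * t ^ 2) = 1)
    (htr : 2 * x = -1 ∨ 2 * x = 0 ∨ 2 * x = 1) :
    IsSquare ((a : ZMod b)) ∨ IsSquare (((-a : ℤ) : ZMod b)) ∨
      IsSquare (((-3 * a : ℤ) : ZMod b)) :=
  elliptic_implies_square_general a b hb hb3 x y z t heq htr
end

section
/- Let b be a prime, a an integer with (a/b) = -1, and suppose rational numbers y, z, t satisfy -a·y² = 1 + b·(z² - a·t²). Then clearing denominators to coprime integers y', z', t' (and an auxiliary integer E) with -a y'² = E² + b(z'² - a t'²), one of a or -a is a quadratic residue modulo b; hence under the hypothesis (a/b) = -1 and (-a/b) = -1, no such rationals exist. -/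
/-!
Clearing denominators gives integers with `-a Y² = E² + b (Z² - a T²)` and `E ≠ 0`. Modulo `b`
this reads `-a Y² ≡ E²`, so `-a` is a square unless `b ∣ Y`; then `b ∣ E` as well, and dividing
by `b` leaves `Z² ≡ a T²`, so `a` is a square unless `b ∣ T`; then `b ∣ Z` too, and
`(Y, E, Z, T) / b` is a smaller solution of the same equation. Descent on `|E|` concludes.
-/

theorem isSquare_of_mul_sq_eq_sq {K : Type*} [Field K] {c x y : K} (hx : x ≠ 0)
    (h : c * x ^ 2 = y ^ 2) : IsSquare c :=
  ⟨y / x, by rw [div_mul_div_comm, eq_div_iff (mul_ne_zero hx hx)]; linear_combination h⟩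

theorem intCast_eq_of_eq_add_mul {n : ℕ} {u v w : ℤ} (h : u = v + n * w) :
    (u : ZMod n) = v := by
  rw [h]
  push_cast
  rw [ZMod.natCast_self, zero_mul, add_zero]

theorem natCast_dvd_of_intCast_sq_eq_zero {p : ℕ} [Fact p.Prime] {x : ℤ}
    (h : (x : ZMod p) ^ 2 = 0) : (p : ℤ) ∣ x :=
  (ZMod.intCast_zmod_eq_zero_iff_dvd x p).mp (pow_eq_zero_iff two_ne_zero |>.mp h)

theorem isSquare_or_isSquare_neg_of_eq {p : ℕ} [Fact p.Prime] {a : ℤ} {Y E Z T : ℤ}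
    (hE : E ≠ 0) (h : -a * Y ^ 2 = E ^ 2 + p * (Z ^ 2 - a * T ^ 2)) :
    IsSquare (a : ZMod p) ∨ IsSquare ((-a : ℤ) : ZMod p) := by
  induction hn : E.natAbs using Nat.strong_induction_on generalizing Y E Z T with
  | _ n ih =>
  have hp : (p : ℤ) ≠ 0 := by exact_mod_cast (Fact.out : p.Prime).ne_zero
  have hYE : ((-a : ℤ) : ZMod p) * (Y : ZMod p) ^ 2 = (E : ZMod p) ^ 2 := by
    exact_mod_cast intCast_eq_of_eq_add_mul h
  by_cases hY : (Y : ZMod p) = 0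
  swap
  · exact .inr (isSquare_of_mul_sq_eq_sq hY hYE)
  obtain ⟨Y₁, rfl⟩ := (ZMod.intCast_zmod_eq_zero_iff_dvd Y p).mp hY
  obtain ⟨E₁, rfl⟩ := natCast_dvd_of_intCast_sq_eq_zero (p := p) (x := E)
    (by rw [← hYE, hY]; ring)
  have hZT : Z ^ 2 = a * T ^ 2 + p * (-a * Y₁ ^ 2 - E₁ ^ 2) :=
    mul_left_cancel₀ hp (by linear_combination -h)
  have hZT' : (a : ZMod p) * (T : ZMod p) ^ 2 = (Z : ZMod p) ^ 2 := by
    exact_mod_cast (intCast_eq_of_eq_add_mul hZT).symm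
  by_cases hT : (T : ZMod p) = 0
  swap
  · exact .inl (isSquare_of_mul_sq_eq_sq hT hZT')
  obtain ⟨T₁, rfl⟩ := (ZMod.intCast_zmod_eq_zero_iff_dvd T p).mp hT
  obtain ⟨Z₁, rfl⟩ := natCast_dvd_of_intCast_sq_eq_zero (p := p) (x := Z)
    (by rw [← hZT', hT]; ring)
  have hE₁ : E₁ ≠ 0 := right_ne_zero_of_mul hE
  have h₁ : -a * Y₁ ^ 2 = E₁ ^ 2 + p * (Z₁ ^ 2 - a * T₁ ^ 2) :=
    mul_left_cancel₀ (pow_ne_zero 2 hp) (by linear_combination h)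
  have hlt : E₁.natAbs < n := by
    rw [← hn, Int.natAbs_mul, Int.natAbs_natCast]
    exact lt_mul_left (Int.natAbs_pos.mpr hE₁) (Fact.out : p.Prime).one_lt
  exact ih _ hlt hE₁ h₁ rfl

theorem exists_int_eq_of_rat_eq {a b : ℤ} {y z t : ℚ}
    (h : -(a : ℚ) * y ^ 2 = 1 + (b : ℚ) * (z ^ 2 - (a : ℚ) * t ^ 2)) :
    ∃ Y E Z T : ℤ, E ≠ 0 ∧ -a * Y ^ 2 = E ^ 2 + b * (Z ^ 2 - a * T ^ 2) := by
  refine ⟨y.num * z.den * t.den, y.den * z.den * t.den, y.den * z.num * t.den,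
    y.den * z.den * t.num, by positivity, ?_⟩
  qify
  rw [← y.mul_den_eq_num, ← z.mul_den_eq_num, ← t.mul_den_eq_num]
  linear_combination ((y.den : ℚ) * z.den * t.den) ^ 2 * h

/-- Case x = 0 of the elliptic element analysis: a rational solution of
-a y² = 1 + b (z² - a t²) forces a or -a to be a quadratic residue mod b;
hence if both a and -a are nonresidues mod b, no such rationals exist. -/
theorem trace_zero_elliptic_case
    (b : ℕ) (hb : b.Prime) (a : ℤ) (ha : @legendreSym b ⟨hb⟩ a = -1)
    (y z t : ℚ)
    (heq : -(a : ℚ) * y ^ 2 = 1 + (b : ℚ) * (z ^ 2 - (a : ℚ) * t ^ 2)) :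
    (IsSquare ((a : ZMod b)) ∨ IsSquare (((-a : ℤ) : ZMod b))) ∧
      (@legendreSym b ⟨hb⟩ (-a) = -1 → False) := by
  have : Fact b.Prime := ⟨hb⟩
  obtain ⟨Y, E, Z, T, hE, hint⟩ :=
    exists_int_eq_of_rat_eq (a := a) (b := b) (by exact_mod_cast heq)
  have hsq := isSquare_or_isSquare_neg_of_eq hE hint
  exact ⟨hsq, fun hna => hsq.elim ((legendreSym.eq_neg_one_iff b).mp ha)
    ((legendreSym.eq_neg_one_iff b).mp hna)⟩
end

section
/- Let a < 0 be a squarefree integer and b a prime with (a/b) = -1. For F = ℚ(√a) with ring of integers O_F, order I₀ = O_F ⊕ O_F·Ω in the quaternion algebra (a,b/ℚ), and an order I with D'I ⊆ D·I₀ ⊆ I for nonzero integers D, D': for every prime p with p ∤ 2abDD' and (a/p) = -1, and every primitive α = ξ + ηΩ ∈ I with N(α) = |ξ|² - b|η|² ≡ 0 (mod p), one has ord_p(N(ξ)) = ord_p(N(η)) = 0; in particular ξ·η ≠ 0. -/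
/-!
Write `α = ξ + ηΩ` and `D'α = Dβ` with `β ∈ I₀`, `2β = (u + v√a) + (s + t√a)Ω`. As `p ∤ 2DD'`,
`N(ξ)` and `N(η)` are `U = u² - av²` and `S = s² - at²` up to `p`-adic units, and
`N(α) ≡ 0 (mod p)` with `p ∤ b` makes `p ∣ U ↔ p ∣ S`. If `p` divided both, then, `p` being inert
in `F`, it would divide `u, v, s, t`, so `β ∈ pI₀` (`p` is odd) and `Dβ/p ∈ I`; a Bézout relation
`xp + yD' = 1` then gives `α = p(xα + y·Dβ/p) ∈ pI`, against primitivity. Hence `p ∤ U, S`.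
-/

theorem AddSubgroup.exists_eq_zsmul_of_isCoprime {G : Type*} [AddCommGroup G] (H : AddSubgroup G)
    {p d : ℤ} (hpd : IsCoprime p d) {x y : G} (hx : x ∈ H) (hy : y ∈ H) (h : d • x = p • y) :
    ∃ z ∈ H, x = p • z := by
  obtain ⟨r, s, hrs⟩ := hpd
  refine ⟨r • x + s • y, H.add_mem (H.zsmul_mem hx r) (H.zsmul_mem hy s), ?_⟩
  calc x = (r * p + s * d) • x := by rw [hrs, one_smul]
    _ = r • p • x + s • d • x := by rw [add_smul, mul_smul, mul_smul]
    _ = p • (r • x + s • y) := by rw [h, smul_add, smul_comm p r, smul_comm p s]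

theorem Prime.dvd_iff_dvd_of_dvd_sub_mul {R : Type*} [CommRing R] {p b x y : R} (hp : Prime p)
    (hb : ¬ p ∣ b) (h : p ∣ x - b * y) : p ∣ x ↔ p ∣ y := by
  constructor
  · intro hx
    have hby : p ∣ b * y := by simpa using dvd_sub hx h
    exact (hp.dvd_mul.1 hby).resolve_left hb
  · intro hy
    simpa using dvd_add h (hy.mul_left b)

theorem Prime.dvd_sub_mul_of_mul_eq_mul {p c d n₁ n₂ b m : ℤ} (hp : Prime p) {q₁ q₂ : ℚ}
    (h₁ : c * q₁ = ((d * n₁ : ℤ) : ℚ)) (h₂ : c * q₂ = ((d * n₂ : ℤ) : ℚ)) (hm : q₁ - b * q₂ = m)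
    (hpm : p ∣ m) (hpd : ¬ p ∣ d) : p ∣ n₁ - b * n₂ := by
  have h : c * m = d * (n₁ - b * n₂) := by
    have : ((c * m : ℤ) : ℚ) = ((d * (n₁ - b * n₂) : ℤ) : ℚ) := by
      push_cast at h₁ h₂ ⊢
      rw [← hm]
      linear_combination h₁ - b * h₂
    exact_mod_cast this
  exact (hp.dvd_mul.1 (h ▸ hpm.mul_left c)).resolve_left hpd

theorem padicValRat_eq_zero_of_intCast_mul_eq {p : ℕ} [Fact p.Prime] {q : ℚ} {c n : ℤ}
    (h : c * q = n) (hc : ¬ (p : ℤ) ∣ c) (hn : ¬ (p : ℤ) ∣ n) :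
    padicValRat p q = 0 ∧ q ≠ 0 := by
  have hc0 : (c : ℚ) ≠ 0 := Int.cast_ne_zero.2 fun h0 => hc (h0 ▸ dvd_zero _)
  have hn0 : (n : ℚ) ≠ 0 := Int.cast_ne_zero.2 fun h0 => hn (h0 ▸ dvd_zero _)
  have hq : q = n / c := by rw [eq_div_iff hc0, mul_comm, h]
  refine ⟨?_, hq ▸ div_ne_zero hn0 hc0⟩
  rw [hq, padicValRat.div hn0 hc0, padicValRat.of_int, padicValRat.of_int,
    padicValInt.eq_zero_of_not_dvd hn, padicValInt.eq_zero_of_not_dvd hc, sub_self]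

theorem QuaternionAlgebra.coe_intCast_mul_eq_zsmul {c₁ c₂ c₃ : ℚ} (k : ℤ)
    (x : QuaternionAlgebra ℚ c₁ c₂ c₃) : ((k : ℚ) : QuaternionAlgebra ℚ c₁ c₂ c₃) * x = k • x := by
  rw [QuaternionAlgebra.coe_mul_eq_smul, Int.cast_smul_eq_zsmul]

theorem QuaternionAlgebra.zsmul_eq_zsmul_iff {c₁ c₂ c₃ : ℚ} {k l : ℤ}
    {x y : QuaternionAlgebra ℚ c₁ c₂ c₃} :
    k • x = l • y ↔ k * x.re = l * y.re ∧ k * x.imI = l * y.imI ∧ k * x.imJ = l * y.imJ ∧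
      k * x.imK = l * y.imK := by
  simp only [QuaternionAlgebra.ext_iff, ← Int.cast_smul_eq_zsmul ℚ, QuaternionAlgebra.re_smul,
    QuaternionAlgebra.imI_smul, QuaternionAlgebra.imJ_smul, QuaternionAlgebra.imK_smul, smul_eq_mul]

/-- The pairs `(x, y)` with `x + y√a ∈ O_F`, for squarefree `a`. -/
def integerCoords (a : ℤ) : Set (ℚ × ℚ) :=
  if a % 4 = 1
    then {xy : ℚ × ℚ | ∃ m n : ℤ, xy.1 = (m : ℚ) + (n : ℚ) / 2 ∧ xy.2 = (n : ℚ) / 2}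
    else {xy : ℚ × ℚ | ∃ m n : ℤ, xy.1 = (m : ℚ) ∧ xy.2 = (n : ℚ)}

/-- `I₀ = O_F ⊕ O_F Ω` with `Ω = j`. -/
def baseOrder (a : ℤ) (c₂ c₃ : ℚ) : Set (QuaternionAlgebra ℚ (a : ℚ) c₂ c₃) :=
  {β | (β.re, β.imI) ∈ integerCoords a ∧ (β.imJ, β.imK) ∈ integerCoords a}

section integerCoords

variable {a : ℤ}

theorem exists_eq_half_of_mem_integerCoords {x y : ℚ} (h : (x, y) ∈ integerCoords a) :
    ∃ u v : ℤ, x = u / 2 ∧ y = v / 2 := by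
  unfold integerCoords at h
  split_ifs at h
  · obtain ⟨m, n, hx, hy⟩ := h
    exact ⟨2 * m + n, n, hx.trans (by push_cast; ring), hy⟩
  · obtain ⟨m, n, hx, hy⟩ := h
    exact ⟨2 * m, 2 * n, hx.trans (by push_cast; ring), hy.trans (by push_cast; ring)⟩

theorem half_mem_integerCoords_iff (u v : ℤ) :
    ((u : ℚ) / 2, (v : ℚ) / 2) ∈ integerCoords a ↔
      if a % 4 = 1 then Even (u - v) else Even u ∧ Even v := by
  unfold integerCoords
  split_ifs
  · constructor
    · rintro ⟨m, n, hu, hv⟩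
      have : (u : ℚ) - v = m + m := by linarith
      exact ⟨m, by exact_mod_cast this⟩
    · rintro ⟨r, hr⟩
      refine ⟨r, v, ?_, rfl⟩
      rw [show u = r + r + v by omega]
      push_cast; ring
  · constructor
    · rintro ⟨m, n, hu, hv⟩
      refine ⟨⟨m, ?_⟩, ⟨n, ?_⟩⟩
      · have : (u : ℚ) = m + m := by linarith
        exact_mod_cast this
      · have : (v : ℚ) = n + n := by linarith
        exact_mod_cast this
    · rintro ⟨⟨m, rfl⟩, ⟨n, rfl⟩⟩
      exact ⟨m, n, by push_cast; ring, by push_cast; ring⟩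

theorem half_mem_integerCoords_of_odd_mul {k u v : ℤ} (hk : Odd k)
    (h : (((k * u : ℤ) : ℚ) / 2, ((k * v : ℤ) : ℚ) / 2) ∈ integerCoords a) :
    ((u : ℚ) / 2, (v : ℚ) / 2) ∈ integerCoords a := by
  have hk_even (n : ℤ) : Even (k * n) ↔ Even n := by
    simp [Int.even_mul, Int.not_even_iff_odd.mpr hk]
  rw [half_mem_integerCoords_iff] at h ⊢
  split_ifs at h ⊢
  · rwa [← mul_sub, hk_even] at h
  · rwa [hk_even, hk_even] at h

end integerCoords

section baseOrder

variable {a : ℤ} {c₂ c₃ : ℚ}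

theorem exists_eq_mk_half_of_mem_baseOrder {β : QuaternionAlgebra ℚ (a : ℚ) c₂ c₃}
    (h : β ∈ baseOrder a c₂ c₃) :
    ∃ u v s t : ℤ, β = ⟨u / 2, v / 2, s / 2, t / 2⟩ := by
  obtain ⟨u, v, hu, hv⟩ := exists_eq_half_of_mem_integerCoords h.1
  obtain ⟨s, t, hs, ht⟩ := exists_eq_half_of_mem_integerCoords h.2
  exact ⟨u, v, s, t, QuaternionAlgebra.ext hu hv hs ht⟩

theorem exists_eq_zsmul_of_odd_dvd {k u v s t : ℤ} (hk : Odd k)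
    (h : (⟨u / 2, v / 2, s / 2, t / 2⟩ : QuaternionAlgebra ℚ (a : ℚ) c₂ c₃) ∈ baseOrder a c₂ c₃)
    (hu : k ∣ u) (hv : k ∣ v) (hs : k ∣ s) (ht : k ∣ t) :
    ∃ γ ∈ baseOrder a c₂ c₃,
      (⟨u / 2, v / 2, s / 2, t / 2⟩ : QuaternionAlgebra ℚ (a : ℚ) c₂ c₃) = k • γ := by
  obtain ⟨⟨u, rfl⟩, ⟨v, rfl⟩, ⟨s, rfl⟩, ⟨t, rfl⟩⟩ := And.intro hu (And.intro hv (And.intro hs ht))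
  refine ⟨⟨u / 2, v / 2, s / 2, t / 2⟩,
    ⟨half_mem_integerCoords_of_odd_mul hk h.1, half_mem_integerCoords_of_odd_mul hk h.2⟩, ?_⟩
  ext <;> simp only [← Int.cast_smul_eq_zsmul ℚ, QuaternionAlgebra.re_smul,
    QuaternionAlgebra.imI_smul, QuaternionAlgebra.imJ_smul, QuaternionAlgebra.imK_smul,
    smul_eq_mul] <;> push_cast <;> ring

theorem exists_eq_zsmul_of_dvd_norms {p : ℕ} [Fact p.Prime] (hap : legendreSym p a = -1)
    (hp2 : ¬ (p : ℤ) ∣ 2) {u v s t : ℤ}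
    (h : (⟨u / 2, v / 2, s / 2, t / 2⟩ : QuaternionAlgebra ℚ (a : ℚ) c₂ c₃) ∈ baseOrder a c₂ c₃)
    (hU : (p : ℤ) ∣ u ^ 2 - a * v ^ 2) (hS : (p : ℤ) ∣ s ^ 2 - a * t ^ 2) :
    ∃ γ ∈ baseOrder a c₂ c₃,
      (⟨u / 2, v / 2, s / 2, t / 2⟩ : QuaternionAlgebra ℚ (a : ℚ) c₂ c₃) = (p : ℤ) • γ := by
  have hp_ne_two : p ≠ 2 := by rintro rfl; exact hp2 (by norm_num)
  have hp_odd : Odd (p : ℤ) := (Int.odd_coe_nat p).2 ((Fact.out : p.Prime).odd_of_ne_two hp_ne_two)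
  obtain ⟨hu, hv⟩ := legendreSym.prime_dvd_of_eq_neg_one hap hU
  obtain ⟨hs, ht⟩ := legendreSym.prime_dvd_of_eq_neg_one hap hS
  exact exists_eq_zsmul_of_odd_dvd hp_odd h hu hv hs ht

end baseOrder

theorem sq_mul_sq_sub_mul_sq_of_mul_eq_half {a D D' u v : ℤ} {x y : ℚ}
    (hx : D' * x = D * (u / 2)) (hy : D' * y = D * (v / 2)) :
    ((2 * D') ^ 2 : ℤ) * (x ^ 2 - a * y ^ 2) = ((D ^ 2 * (u ^ 2 - a * v ^ 2) : ℤ) : ℚ) := by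
  push_cast
  linear_combination 2 * (2 * D' * x + D * u) * hx - 2 * a * (2 * D' * y + D * v) * hy

theorem primitive_norm_valuation_zero_general
    (a : ℤ)
    (b : ℕ)
    (OF : Set (ℚ × ℚ))
    (hOF : OF = if a % 4 = 1
      then {xy : ℚ × ℚ | ∃ m n : ℤ, xy.1 = (m : ℚ) + (n : ℚ) / 2 ∧ xy.2 = (n : ℚ) / 2}
      else {xy : ℚ × ℚ | ∃ m n : ℤ, xy.1 = (m : ℚ) ∧ xy.2 = (n : ℚ)})
    (I : Subring (QuaternionAlgebra ℚ (a : ℚ) 0 (b : ℚ)))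
    (D D' : ℤ)
    (h1 : ∀ α ∈ I, ∃ β : QuaternionAlgebra ℚ (a : ℚ) 0 (b : ℚ),
      ((β.re, β.imI) ∈ OF ∧ (β.imJ, β.imK) ∈ OF) ∧
        ((D' : ℚ) : QuaternionAlgebra ℚ (a : ℚ) 0 (b : ℚ)) * α =
          ((D : ℚ) : QuaternionAlgebra ℚ (a : ℚ) 0 (b : ℚ)) * β)
    (h2 : ∀ β : QuaternionAlgebra ℚ (a : ℚ) 0 (b : ℚ),
      (β.re, β.imI) ∈ OF → (β.imJ, β.imK) ∈ OF →
        ((D : ℚ) : QuaternionAlgebra ℚ (a : ℚ) 0 (b : ℚ)) * β ∈ I)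
    (p : ℕ) (hp : p.Prime)
    (hpdvd : ¬ ((p : ℤ) ∣ 2 * a * (b : ℤ) * D * D'))
    (hap : @legendreSym p ⟨hp⟩ a = -1)
    (α : QuaternionAlgebra ℚ (a : ℚ) 0 (b : ℚ)) (hαI : α ∈ I)
    (hprim : ∀ (k : ℤ), ¬ IsUnit k → ∀ β ∈ I,
      α ≠ ((k : ℚ) : QuaternionAlgebra ℚ (a : ℚ) 0 (b : ℚ)) * β)
    (m : ℤ)
    (hm : ((α.re ^ 2 - (a : ℚ) * α.imI ^ 2) - (b : ℚ) * (α.imJ ^ 2 - (a : ℚ) * α.imK ^ 2)) = (m : ℚ))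
    (hmp : (p : ℤ) ∣ m) :
    padicValRat p (α.re ^ 2 - (a : ℚ) * α.imI ^ 2) = 0 ∧
      padicValRat p (α.imJ ^ 2 - (a : ℚ) * α.imK ^ 2) = 0 ∧
      ¬ (α.re = 0 ∧ α.imI = 0) ∧ ¬ (α.imJ = 0 ∧ α.imK = 0) := by
  have : Fact p.Prime := ⟨hp⟩
  have pp : Prime (p : ℤ) := Nat.prime_iff_prime_int.mp hp
  simp only [pp.dvd_mul, not_or] at hpdvd
  obtain ⟨⟨⟨⟨hp2, -⟩, hpb⟩, hpD⟩, hpD'⟩ := hpdvd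
  subst hOF
  simp only [QuaternionAlgebra.coe_intCast_mul_eq_zsmul] at h1 h2 hprim
  obtain ⟨β, hβ₀, hβ⟩ := h1 α hαI
  obtain ⟨u, v, s, t, rfl⟩ := exists_eq_mk_half_of_mem_baseOrder hβ₀
  obtain ⟨hre, himI, himJ, himK⟩ := QuaternionAlgebra.zsmul_eq_zsmul_iff.1 hβ
  have hξ := sq_mul_sq_sub_mul_sq_of_mul_eq_half (a := a) hre himI
  have hη := sq_mul_sq_sub_mul_sq_of_mul_eq_half (a := a) himJ himK
  have hD2 : ¬ (p : ℤ) ∣ D ^ 2 := mt pp.dvd_of_dvd_pow hpD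
  have hUS := pp.dvd_iff_dvd_of_dvd_sub_mul hpb
    (pp.dvd_sub_mul_of_mul_eq_mul hξ hη (by exact_mod_cast hm) hmp hD2)
  have hnot : ¬ ((p : ℤ) ∣ u ^ 2 - a * v ^ 2 ∧ (p : ℤ) ∣ s ^ 2 - a * t ^ 2) := by
    rintro ⟨hU, hS⟩
    obtain ⟨γ, hγ, hβγ⟩ := exists_eq_zsmul_of_dvd_norms hap hp2 hβ₀ hU hS
    obtain ⟨δ, hδ, hαδ⟩ := I.toAddSubgroup.exists_eq_zsmul_of_isCoprime
      (pp.coprime_iff_not_dvd.2 hpD') hαI (h2 γ hγ.1 hγ.2) (by rw [hβ, hβγ, smul_comm])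
    exact hprim p pp.not_isUnit δ hδ hαδ
  have hc : ¬ (p : ℤ) ∣ (2 * D') ^ 2 := mt pp.dvd_of_dvd_pow (pp.not_dvd_mul hp2 hpD')
  obtain ⟨hvξ, hξ0⟩ := padicValRat_eq_zero_of_intCast_mul_eq hξ hc
    (pp.not_dvd_mul hD2 fun h => hnot ⟨h, hUS.1 h⟩)
  obtain ⟨hvη, hη0⟩ := padicValRat_eq_zero_of_intCast_mul_eq hη hc
    (pp.not_dvd_mul hD2 fun h => hnot ⟨hUS.2 h, h⟩)
  exact ⟨hvξ, hvη, fun h => hξ0 (by rw [h.1, h.2]; ring), fun h => hη0 (by rw [h.1, h.2]; ring)⟩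

/-- In the quaternion algebra (a,b/ℚ) with a < 0 squarefree, (a/b) = -1,
I₀ = O_F ⊕ O_F Ω, and I an order with D'·I ⊆ D·I₀ ⊆ I: for every prime p with
p ∤ 2abDD' and (a/p) = -1 and every primitive α = ξ + ηΩ ∈ I with p | N(α), one
has ord_p N(ξ) = ord_p N(η) = 0; in particular ξ ≠ 0 and η ≠ 0. -/
theorem primitive_norm_valuation_zero
    (a : ℤ) (hsf : Squarefree a) (hneg : a < 0)
    (b : ℕ) (hb : b.Prime) (hab : @legendreSym b ⟨hb⟩ a = -1)
    (OF : Set (ℚ × ℚ))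
    (hOF : OF = if a % 4 = 1
      then {xy : ℚ × ℚ | ∃ m n : ℤ, xy.1 = (m : ℚ) + (n : ℚ) / 2 ∧ xy.2 = (n : ℚ) / 2}
      else {xy : ℚ × ℚ | ∃ m n : ℤ, xy.1 = (m : ℚ) ∧ xy.2 = (n : ℚ)})
    (I : Subring (QuaternionAlgebra ℚ (a : ℚ) 0 (b : ℚ)))
    (D D' : ℤ) (hD : D ≠ 0) (hD' : D' ≠ 0)
    (h1 : ∀ α ∈ I, ∃ β : QuaternionAlgebra ℚ (a : ℚ) 0 (b : ℚ),
      ((β.re, β.imI) ∈ OF ∧ (β.imJ, β.imK) ∈ OF) ∧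
        ((D' : ℚ) : QuaternionAlgebra ℚ (a : ℚ) 0 (b : ℚ)) * α =
          ((D : ℚ) : QuaternionAlgebra ℚ (a : ℚ) 0 (b : ℚ)) * β)
    (h2 : ∀ β : QuaternionAlgebra ℚ (a : ℚ) 0 (b : ℚ),
      (β.re, β.imI) ∈ OF → (β.imJ, β.imK) ∈ OF →
        ((D : ℚ) : QuaternionAlgebra ℚ (a : ℚ) 0 (b : ℚ)) * β ∈ I)
    (p : ℕ) (hp : p.Prime)
    (hpdvd : ¬ ((p : ℤ) ∣ 2 * a * (b : ℤ) * D * D'))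
    (hap : @legendreSym p ⟨hp⟩ a = -1)
    (α : QuaternionAlgebra ℚ (a : ℚ) 0 (b : ℚ)) (hαI : α ∈ I)
    (hprim : ∀ (k : ℤ), ¬ IsUnit k → ∀ β ∈ I,
      α ≠ ((k : ℚ) : QuaternionAlgebra ℚ (a : ℚ) 0 (b : ℚ)) * β)
    (m : ℤ)
    (hm : ((α.re ^ 2 - (a : ℚ) * α.imI ^ 2) - (b : ℚ) * (α.imJ ^ 2 - (a : ℚ) * α.imK ^ 2)) = (m : ℚ))
    (hmp : (p : ℤ) ∣ m) :
    padicValRat p (α.re ^ 2 - (a : ℚ) * α.imI ^ 2) = 0 ∧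
      padicValRat p (α.imJ ^ 2 - (a : ℚ) * α.imK ^ 2) = 0 ∧
      ¬ (α.re = 0 ∧ α.imI = 0) ∧ ¬ (α.imJ = 0 ∧ α.imK = 0) :=
  primitive_norm_valuation_zero_general a b OF hOF I D D' h1 h2 p hp hpdvd hap α hαI hprim m hm hmp
end

section
/- Let Γ be a group acting properly discontinuously by isometries on ℍ³, and let L₁, L₂ be complete geodesics of ℍ³, γ₁, γ₂ ∈ Γ hyperbolic with axes L₁, L₂ and compact segments l₁ ⊂ L₁, l₂ ⊂ L₂ with Lᵢ = ⋃_{n∈ℤ} γᵢⁿ·lᵢ. If the projections L̄₁ = π(L₁) and L̄₂ = π(L₂) to Γ\ℍ³ intersect in infinitely many points, then L̄₁ = L̄₂. -/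
/-!
Since `Lᵢ` is swept out by translates of `lᵢ`, the projections of `Lᵢ` and `lᵢ` agree, so every
common point of the projections lifts to a point of `l₁ ∩ δ • l₂` for some `δ ∈ Γ`. Such a `δ`
moves the compact set `l₁ ∪ l₂` to meet itself, so by proper discontinuity only finitely many
occur and one of these intersections is infinite. Then `L₁ = δ • L₂`, whose projection is that
of `L₂`.
-/

open Pointwise

namespace MulAction

variable {Γ X : Type*} [Group Γ] [MulAction Γ X]

theorem image_mk_smul_set (δ : Γ) (s : Set X) :
    Quotient.mk (orbitRel Γ X) '' (δ • s) = Quotient.mk (orbitRel Γ X) '' s := by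
  rw [← Set.image_smul, Set.image_image]
  exact Set.image_congr fun x _ => Quotient.sound ⟨δ, rfl⟩

theorem image_mk_iUnion_smul_set {ι : Type*} [Nonempty ι] (g : ι → Γ) (s : Set X) :
    Quotient.mk (orbitRel Γ X) '' (⋃ i, g i • s) = Quotient.mk (orbitRel Γ X) '' s := by
  simp only [Set.image_iUnion, image_mk_smul_set, Set.iUnion_const]

theorem exists_inter_smul_infinite_of_image_mk_inter_infinite {K s t : Set X}
    (hK : {γ : Γ | ((γ • ·) '' K ∩ K).Nonempty}.Finite) (hs : s ⊆ K) (ht : t ⊆ K)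
    (h : (Quotient.mk (orbitRel Γ X) '' s ∩ Quotient.mk (orbitRel Γ X) '' t).Infinite) :
    ∃ δ : Γ, (s ∩ δ • t).Infinite := by
  by_contra! hfin
  have hcover : Quotient.mk (orbitRel Γ X) '' s ∩ Quotient.mk (orbitRel Γ X) '' t ⊆
      Quotient.mk (orbitRel Γ X) '' ⋃ δ ∈ {γ : Γ | ((γ • ·) '' K ∩ K).Nonempty}, s ∩ δ • t := by
    rintro _ ⟨⟨a, ha, rfl⟩, b, hb, hab⟩
    obtain ⟨δ, rfl⟩ : a ∈ orbit Γ b := Quotient.exact hab.symm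
    exact ⟨δ • b, Set.mem_biUnion ⟨δ • b, ⟨b, ht hb, rfl⟩, hs ha⟩
      ⟨ha, Set.smul_mem_smul_set hb⟩, rfl⟩
  exact h (((hK.biUnion fun δ _ => hfin δ).image _).subset hcover)

end MulAction

theorem closed_geodesics_finite_intersection_general
    {X : Type*} [MetricSpace X] (Γ : Type*) [Group Γ] [MulAction Γ X]
    (hpd : ∀ K : Set X, IsCompact K →
      {γ : Γ | (((γ • ·) '' K) ∩ K).Nonempty}.Finite)
    (L₁ L₂ : Set X)
    (hgeo : ∀ γ : Γ, (L₁ ∩ γ • L₂).Infinite → L₁ = γ • L₂)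
    (γ₁ γ₂ : Γ) (l₁ l₂ : Set X) (hc₁ : IsCompact l₁) (hc₂ : IsCompact l₂)
    (hl₁ : l₁ ⊆ L₁) (hl₂ : l₂ ⊆ L₂)
    (hL₁ : L₁ = ⋃ n : ℤ, γ₁ ^ n • l₁) (hL₂ : L₂ = ⋃ n : ℤ, γ₂ ^ n • l₂)
    (hinf : ((Quotient.mk (MulAction.orbitRel Γ X) '' L₁) ∩
        (Quotient.mk (MulAction.orbitRel Γ X) '' L₂)).Infinite) :
    Quotient.mk (MulAction.orbitRel Γ X) '' L₁ =
      Quotient.mk (MulAction.orbitRel Γ X) '' L₂ := by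
  rw [hL₁, hL₂, MulAction.image_mk_iUnion_smul_set, MulAction.image_mk_iUnion_smul_set] at hinf
  obtain ⟨δ, hδ⟩ := MulAction.exists_inter_smul_infinite_of_image_mk_inter_infinite
    (hpd _ (hc₁.union hc₂)) Set.subset_union_left Set.subset_union_right hinf
  rw [hgeo δ (hδ.mono (Set.inter_subset_inter hl₁ (Set.smul_set_mono hl₂))),
    MulAction.image_mk_smul_set]

/-- If Γ acts properly discontinuously by isometries on X (= ℍ³), L₁ and L₂
are complete geodesics (so that an infinite intersection of L₁ with a
Γ-translate of L₂ forces equality), γ₁, γ₂ ∈ Γ are hyperbolic with axes L₁, L₂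
swept out by compact segments l₁, l₂, and the projections of L₁ and L₂ to
Γ\X intersect in infinitely many points, then these projections coincide. -/
theorem closed_geodesics_finite_intersection
    {X : Type*} [MetricSpace X] (Γ : Type*) [Group Γ] [MulAction Γ X]
    (hiso : ∀ γ : Γ, Isometry (fun x : X => γ • x))
    (hpd : ∀ K : Set X, IsCompact K →
      {γ : Γ | (((γ • ·) '' K) ∩ K).Nonempty}.Finite)
    (L₁ L₂ : Set X)
    (hgeo : ∀ γ : Γ, (L₁ ∩ γ • L₂).Infinite → L₁ = γ • L₂)
    (γ₁ γ₂ : Γ) (l₁ l₂ : Set X) (hc₁ : IsCompact l₁) (hc₂ : IsCompact l₂)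
    (hl₁ : l₁ ⊆ L₁) (hl₂ : l₂ ⊆ L₂)
    (hL₁ : L₁ = ⋃ n : ℤ, γ₁ ^ n • l₁) (hL₂ : L₂ = ⋃ n : ℤ, γ₂ ^ n • l₂)
    (hinf : ((Quotient.mk (MulAction.orbitRel Γ X) '' L₁) ∩
        (Quotient.mk (MulAction.orbitRel Γ X) '' L₂)).Infinite) :
    Quotient.mk (MulAction.orbitRel Γ X) '' L₁ =
      Quotient.mk (MulAction.orbitRel Γ X) '' L₂ :=
  closed_geodesics_finite_intersection_general Γ hpd L₁ L₂ hgeo γ₁ γ₂ l₁ l₂ hc₁ hc₂ hl₁ hl₂ hL₁ hL₂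
    hinf
end
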